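/- arXiv:2601.12048 — 4 statements merged into one kernel-verified Lean document; each statement's English description precedes it below -/
import Mathlib

section
/- For every integer n ≥ 0 and every integer r ≥ 2, F_r(n) = F_{r+1}(n); that is, the cardinality of the set of 3-colored partitions of n belonging to F_r is independent of r. -/
/-!
Fix `r ≥ 2` and call a triple of partitions `(b, rd, g)` admissible if `g ∈ B_{r+1,r+1}` and,
whenever `i_k` exists, `ℓ_g ≤ k + i_k`, and even `r + #{green parts > 1} ≤ k + i_k` if
`g ∈ B_{r,r}`. Then `F_r` consists of the admissible triples with `g ∈ B_{r,r}`, and `F_{r+1}`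
of the admissible triples that are not strippable, i.e. for which `i_k` is undefined or
`k + i_k > r + #{green parts > 1}`.

Stripping removes `k` from the black and `i_k` from the red parts, adds `1` to every green part
and pads with green `1`s up to `k + i_k` green parts. It preserves the size and maps the
strippable admissible triples bijectively onto the admissible triples with `g ∉ B_{r,r}`: the
inverse recovers `k` as the largest index with `k + i_{k-1} ≤ ℓ_g`. Hence `F_r(n)` and
`F_{r+1}(n)` are the sizes of two sets whose complements in the finite set of admissible triples
of size `n` have equal size.
-/

open PowerSeries Finset

/-- `l` is (the list of parts, in non-increasing order, of) an integer partition. -/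
def IsPtn (l : List ℕ) : Prop := l.Pairwise (· ≥ ·) ∧ ∀ x ∈ l, 0 < x

/-- Gordon's difference condition: `λ_j − λ_{j+r−1} ≥ 2` whenever both parts exist. -/
def GordonCond (r : ℕ) (l : List ℕ) : Prop :=
  ∀ j : ℕ, j + (r - 1) < l.length → l.getD (j + (r - 1)) 0 + 2 ≤ l.getD j 0

/-- membership in `B_{r,i}`: Gordon's difference condition and at most `i−1` parts equal to 1. -/
def MemB (r i : ℕ) (l : List ℕ) : Prop := IsPtn l ∧ GordonCond r l ∧ l.count 1 ≤ i - 1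

/-- the smallest part of a partition (listed in non-increasing order). -/
def Kpart (l : List ℕ) : ℕ := l.getD (l.length - 1) 0

/-- the `k`-th smallest part of a partition (listed in non-increasing order). -/
def Ikpart (l : List ℕ) (k : ℕ) : ℕ := l.getD (l.length - k) 0

/-- membership in the family `F_r` of 3-colored partitions. -/
def MemF (R : ℕ) (b rd g : List ℕ) : Prop :=
  IsPtn b ∧ IsPtn rd ∧ IsPtn g ∧ MemB R R g ∧
    ((b = [] ∨ rd = [])
     ∨ (b ≠ [] ∧ rd ≠ [] ∧ g = [] ∧
         (rd.length ≤ Kpart b - 1 ∨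
          (Kpart b ≤ rd.length ∧ R ≤ Kpart b + Ikpart rd (Kpart b))))
     ∨ (b ≠ [] ∧ rd ≠ [] ∧ g ≠ [] ∧
         (rd.length ≤ Kpart b - 1 ∨
          (Kpart b ≤ rd.length ∧ R ≤ Kpart b + Ikpart rd (Kpart b) ∧
           g.length - g.count 1 < Kpart b + Ikpart rd (Kpart b) - R + 1))))

/-- `F_R(n)`: the number of 3-colored partitions of total size `n` in `F_R`. -/
noncomputable def Fcount (R n : ℕ) : ℕ :=
  Set.ncard {t : List ℕ × List ℕ × List ℕ |
    MemF R t.1 t.2.1 t.2.2 ∧ t.1.sum + t.2.1.sum + t.2.2.sum = n}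

section SortedLists

variable {l : List ℕ}

lemma getD_antitone (hs : l.Pairwise (· ≥ ·)) {i j : ℕ} (hij : i ≤ j) (hj : j < l.length) :
    l.getD j 0 ≤ l.getD i 0 := by
  rw [List.getD_eq_getElem _ _ hj, List.getD_eq_getElem _ _ (by omega)]
  rcases hij.eq_or_lt with rfl | hlt
  · rfl
  · exact List.pairwise_iff_getElem.1 hs i j _ _ hlt

lemma IsPtn.sublist {l' : List ℕ} (hl : IsPtn l) (h : l'.Sublist l) : IsPtn l' :=
  ⟨hl.1.sublist h, fun x hx => hl.2 x (h.subset hx)⟩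

lemma IsPtn.one_le_getD (hl : IsPtn l) {i : ℕ} (hi : i < l.length) : 1 ≤ l.getD i 0 := by
  rw [List.getD_eq_getElem _ _ hi]
  exact hl.2 _ (List.getElem_mem hi)

lemma Kpart_le_of_mem (hs : l.Pairwise (· ≥ ·)) {x : ℕ} (hx : x ∈ l) : Kpart l ≤ x := by
  obtain ⟨i, hi, rfl⟩ := List.getElem_of_mem hx
  rw [← List.getD_eq_getElem _ 0 hi]
  exact getD_antitone hs (by omega) (by omega)

lemma IsPtn.one_le_Kpart (hl : IsPtn l) (hne : l ≠ []) : 1 ≤ Kpart l :=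
  hl.one_le_getD (by have := List.length_pos_iff.2 hne; omega)

lemma Kpart_append_singleton (a : ℕ) : Kpart (l ++ [a]) = a := by
  simp [Kpart]

lemma dropLast_append_Kpart (hne : l ≠ []) : l.dropLast ++ [Kpart l] = l := by
  rw [Kpart, List.getD_eq_getElem _ _ (by have := List.length_pos_iff.2 hne; omega),
    ← List.getLast_eq_getElem hne]
  exact List.dropLast_append_getLast hne

lemma Kpart_le_Kpart_dropLast (hs : l.Pairwise (· ≥ ·)) (hne : l.dropLast ≠ []) :
    Kpart l ≤ Kpart l.dropLast := by
  have := List.length_pos_iff.2 hne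
  simp only [List.length_dropLast] at this
  rw [Kpart, Kpart, List.length_dropLast,
    List.getD_eq_getElem l.dropLast _ (by simp only [List.length_dropLast]; omega),
    List.getElem_dropLast, ← List.getD_eq_getElem l 0]
  exact getD_antitone hs (by omega) (by omega)

lemma Ikpart_zero : Ikpart l 0 = 0 := by
  simp [Ikpart]

lemma Ikpart_mono (hs : l.Pairwise (· ≥ ·)) {a b : ℕ} (hab : a ≤ b) (hb : b ≤ l.length) :
    Ikpart l a ≤ Ikpart l b := by
  rcases Nat.eq_zero_or_pos a with rfl | ha
  · simp [Ikpart_zero]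
  exact getD_antitone hs (by omega) (by omega)

lemma IsPtn.one_le_Ikpart (hl : IsPtn l) {k : ℕ} (hk : 1 ≤ k) (hkl : k ≤ l.length) :
    1 ≤ Ikpart l k :=
  hl.one_le_getD (by omega)

lemma IsPtn.ext {l' : List ℕ} (hl : IsPtn l) (hl' : IsPtn l')
    (h : ∀ v, 1 ≤ v → l.count v = l'.count v) : l = l' := by
  refine List.Perm.eq_of_pairwise' hl.1 hl'.1 (List.perm_iff_count.2 fun v => ?_)
  rcases Nat.eq_zero_or_pos v with rfl | hv
  · rw [List.count_eq_zero.2 fun h0 => (hl.2 0 h0).false,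
      List.count_eq_zero.2 fun h0 => (hl'.2 0 h0).false]
  · exact h v hv

end SortedLists

section GordonWindows

variable {l : List ℕ}

lemma countP_le_eq_add_count (l : List ℕ) (v : ℕ) :
    l.countP (v ≤ ·) = l.countP (v + 2 ≤ ·) + l.count (v + 1) + l.count v := by
  induction l with
  | nil => simp
  | cons a t ih =>
    simp only [List.countP_cons, List.count_cons, ih, decide_eq_true_eq, beq_iff_eq]
    split_ifs <;> omega

lemma le_getD_iff_lt_countP (hs : l.Pairwise (· ≥ ·)) {v j : ℕ} (hj : j < l.length) :
    v ≤ l.getD j 0 ↔ j < l.countP (v ≤ ·) := by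
  induction l generalizing j with
  | nil => simp at hj
  | cons a t ih =>
    rw [List.pairwise_cons] at hs
    have htail : ¬ v ≤ a → t.countP (v ≤ ·) = 0 := fun hva =>
      List.countP_eq_zero.2 fun x hx => by simpa using (hs.1 x hx).trans_lt (not_le.1 hva)
    rcases j with _ | j
    · by_cases hva : v ≤ a <;> simp [hva, htail]
    · rw [List.getD_cons_succ, List.countP_cons, ih hs.2 (by simpa using hj)]
      by_cases hva : v ≤ a <;> simp [hva, htail]

lemma gordonCond_iff (hl : IsPtn l) {R : ℕ} (hR : 1 ≤ R) :
    GordonCond R l ↔ ∀ v, 1 ≤ v → l.count v + l.count (v + 1) < R := by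
  constructor
  · intro hG v _
    by_contra! hwin
    set j := l.countP (v + 2 ≤ ·)
    have hsplit := countP_le_eq_add_count l v
    have hlen : l.countP (v ≤ ·) ≤ l.length := List.countP_le_length
    have hlow : v ≤ l.getD (j + (R - 1)) 0 := (le_getD_iff_lt_countP hl.1 (by omega)).2 (by omega)
    have hhigh : ¬ v + 2 ≤ l.getD j 0 := fun h =>
      (lt_irrefl j) ((le_getD_iff_lt_countP hl.1 (by omega)).1 h)
    have := hG j (by omega)
    omega
  · intro hwin j hj
    set a := l.getD (j + (R - 1)) 0
    have ha : 1 ≤ a := hl.one_le_getD hj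
    have hlow : j + (R - 1) < l.countP (a ≤ ·) := (le_getD_iff_lt_countP hl.1 hj).1 le_rfl
    by_contra! hgap
    have hhigh : l.countP (a + 2 ≤ ·) ≤ j := by
      by_contra! h
      have := (le_getD_iff_lt_countP hl.1 (by omega)).2 h
      omega
    have := countP_le_eq_add_count l a
    have := hwin a ha
    omega

lemma memB_iff (R : ℕ) (hR : 1 ≤ R) :
    MemB R R l ↔ IsPtn l ∧ ∀ v, 1 ≤ v → l.count v + l.count (v + 1) < R := by
  refine ⟨fun h => ⟨h.1, (gordonCond_iff h.1 hR).1 h.2.1⟩, fun h => ⟨h.1, ?_, ?_⟩⟩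
  · exact (gordonCond_iff h.1 hR).2 h.2
  · have := h.2 1 le_rfl
    omega

lemma exists_window_of_not_memB {R : ℕ} (hR : 1 ≤ R) (hl : IsPtn l) (h : ¬ MemB R R l) :
    ∃ v, 1 ≤ v ∧ R ≤ l.count v + l.count (v + 1) := by
  by_contra! hv
  exact h ((memB_iff R hR).2 ⟨hl, hv⟩)

lemma count_add_count_le_length {a b : ℕ} (hab : a ≠ b) :
    l.count a + l.count b ≤ l.length := by
  induction l with
  | nil => simp
  | cons c t ih =>
    simp only [List.count_cons, List.length_cons, beq_iff_eq]
    split_ifs <;> omega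

end GordonWindows

section GreenShifts

def shiftUp (m : ℕ) (g : List ℕ) : List ℕ := g.map (· + 1) ++ List.replicate (m - g.length) 1

def shiftDown (g : List ℕ) : List ℕ := (g.filter (· ≠ 1)).map (· - 1)

variable {g : List ℕ}

lemma length_shiftUp {m : ℕ} (h : g.length ≤ m) : (shiftUp m g).length = m := by
  simp only [shiftUp, List.length_append, List.length_map, List.length_replicate]
  omega

lemma sum_shiftUp {m : ℕ} (h : g.length ≤ m) : (shiftUp m g).sum = g.sum + m := by
  simp only [shiftUp, List.sum_append, List.sum_map_add, List.map_id_fun', id_eq,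
    List.map_const', List.sum_replicate, smul_eq_mul, mul_one]
  omega

lemma count_succ_shiftUp (m : ℕ) {v : ℕ} (hv : 1 ≤ v) :
    (shiftUp m g).count (v + 1) = g.count v := by
  rw [shiftUp, List.count_append, List.count_map_of_injective _ _ Nat.succ_injective,
    List.count_replicate, if_neg (by rw [beq_iff_eq]; omega), add_zero]

lemma count_one_shiftUp (m : ℕ) (hg : IsPtn g) : (shiftUp m g).count 1 = m - g.length := by
  have h0 : g.count 0 = 0 := List.count_eq_zero.2 fun h => (hg.2 0 h).false
  rw [shiftUp, List.count_append, List.count_map_of_injective _ _ Nat.succ_injective (x := 0),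
    h0, List.count_replicate_self, zero_add]

lemma IsPtn.shiftUp (hg : IsPtn g) (m : ℕ) : IsPtn (shiftUp m g) := by
  refine ⟨?_, ?_⟩
  · rw [_root_.shiftUp, List.pairwise_append, List.pairwise_map, List.pairwise_replicate]
    refine ⟨hg.1.imp (by omega), by simp, ?_⟩
    simp only [List.mem_map, List.mem_replicate]
    rintro _ ⟨x, -, rfl⟩ _ ⟨-, rfl⟩
    omega
  · simp only [_root_.shiftUp, List.mem_append, List.mem_map, List.mem_replicate]
    rintro _ (⟨x, -, rfl⟩ | ⟨-, rfl⟩) <;> omega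

lemma count_shiftDown {v : ℕ} (hv : 1 ≤ v) : (shiftDown g).count v = g.count (v + 1) := by
  induction g with
  | nil => rfl
  | cons a t ih =>
    simp only [shiftDown, List.filter_cons, List.count_cons, beq_iff_eq, ne_eq, decide_not] at ih ⊢
    by_cases ha : a = 1
    · simp only [ha, decide_true, Bool.not_true, Bool.false_eq_true, if_false, ih]
      split_ifs <;> omega
    · simp only [ha, decide_false, Bool.not_false, if_true, List.map_cons, List.count_cons, ih,
        beq_iff_eq]
      split_ifs <;> omega

lemma count_one_shiftDown : (shiftDown g).count 1 = g.count 2 :=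
  count_shiftDown le_rfl

lemma length_shiftDown : (shiftDown g).length = g.length - g.count 1 := by
  induction g with
  | nil => rfl
  | cons a t ih =>
    have := List.count_le_length (a := 1) (l := t)
    simp only [shiftDown, List.filter_cons, List.count_cons, beq_iff_eq, ne_eq, decide_not,
      List.length_map] at ih ⊢
    by_cases ha : a = 1
    · simp only [ha, decide_true, Bool.not_true, Bool.false_eq_true, if_false, if_true, ih,
        List.length_cons]
      omega
    · simp only [ha, decide_false, Bool.not_false, if_true, if_false, List.length_cons, ih]
      omega

lemma sum_shiftDown (hg : ∀ x ∈ g, 0 < x) : (shiftDown g).sum + g.length = g.sum := by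
  induction g with
  | nil => rfl
  | cons a t ih =>
    have ha := hg a List.mem_cons_self
    have := ih fun x hx => hg x (List.mem_cons_of_mem a hx)
    simp only [shiftDown, List.filter_cons, ne_eq, decide_not] at this ⊢
    by_cases ha1 : a = 1
    · simp only [ha1, decide_true, Bool.not_true, Bool.false_eq_true, if_false, List.length_cons,
        List.sum_cons]
      omega
    · simp only [ha1, decide_false, Bool.not_false, if_true, List.map_cons, List.length_cons,
        List.sum_cons]
      omega

lemma IsPtn.shiftDown (hg : IsPtn g) : IsPtn (shiftDown g) := by
  have hf : IsPtn (g.filter (· ≠ 1)) := hg.sublist List.filter_sublist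
  refine ⟨?_, ?_⟩
  · exact List.pairwise_map.2 (hf.1.imp (by omega))
  · simp only [_root_.shiftDown, List.mem_map, List.mem_filter]
    rintro _ ⟨x, ⟨hx, hx1⟩, rfl⟩
    have := hg.2 x hx
    rw [decide_eq_true_iff] at hx1
    omega

lemma shiftDown_shiftUp (hg : IsPtn g) (m : ℕ) : shiftDown (shiftUp m g) = g :=
  (hg.shiftUp m).shiftDown.ext hg fun v hv => by
    rw [count_shiftDown hv, count_succ_shiftUp m hv]

lemma shiftUp_shiftDown (hg : IsPtn g) : shiftUp g.length (shiftDown g) = g := by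
  refine hg.shiftDown.shiftUp _ |>.ext hg fun v hv => ?_
  rcases hv.eq_or_lt with rfl | hv
  · have := List.count_le_length (a := 1) (l := g)
    rw [count_one_shiftUp _ hg.shiftDown, length_shiftDown]
    omega
  · obtain ⟨w, rfl⟩ : ∃ w, v = w + 1 := ⟨v - 1, by omega⟩
    rw [count_succ_shiftUp _ (by omega), count_shiftDown (by omega)]

end GreenShifts

section RedParts

variable {l : List ℕ}

lemma Ikpart_eq_getElem {k : ℕ} (hk1 : 1 ≤ k) (hk : k ≤ l.length) :
    Ikpart l k = l[l.length - k] :=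
  List.getD_eq_getElem _ _ _

lemma sum_eraseIdx_add_getElem {p : ℕ} (hp : p < l.length) :
    (l.eraseIdx p).sum + l[p] = l.sum := by
  rw [add_comm]
  exact List.add_sum_eraseIdx hp fun _ _ => AddCommute.all _ _

lemma sum_insertIdx {p : ℕ} (hp : p ≤ l.length) (x : ℕ) :
    (l.insertIdx p x).sum = l.sum + x := by
  rw [add_comm]
  exact List.sum_insertIdx hp fun _ _ => AddCommute.all _ _

lemma Ikpart_eraseIdx_of_lt {k j : ℕ} (hk : k ≤ l.length) (hj1 : 1 ≤ j) (hjk : j < k) :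
    Ikpart (l.eraseIdx (l.length - k)) j = Ikpart l j := by
  have hlen : (l.eraseIdx (l.length - k)).length = l.length - 1 :=
    List.length_eraseIdx_of_lt (by omega)
  rw [Ikpart_eq_getElem hj1 (by omega), Ikpart_eq_getElem hj1 (by omega),
    List.getElem_eraseIdx_of_ge _ (by omega)]
  congr 1
  omega

lemma Ikpart_eraseIdx_of_ge {k j : ℕ} (hk1 : 1 ≤ k) (hkj : k ≤ j) (hj : j < l.length) :
    Ikpart (l.eraseIdx (l.length - k)) j = Ikpart l (j + 1) := by
  have hlen : (l.eraseIdx (l.length - k)).length = l.length - 1 :=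
    List.length_eraseIdx_of_lt (by omega)
  rw [Ikpart_eq_getElem (by omega) (by omega), Ikpart_eq_getElem (by omega) (by omega),
    List.getElem_eraseIdx_of_lt _ (by omega)]
  congr 1
  omega

lemma Ikpart_insertIdx_self {k : ℕ} (x : ℕ) (hk1 : 1 ≤ k) (hk : k ≤ l.length + 1) :
    Ikpart (l.insertIdx (l.length + 1 - k) x) k = x := by
  have hlen : (l.insertIdx (l.length + 1 - k) x).length = l.length + 1 :=
    List.length_insertIdx_of_le_length (by omega) x
  rw [Ikpart_eq_getElem hk1 (by omega)]
  simp [hlen]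

lemma pairwise_insertIdx {k x : ℕ} (hs : l.Pairwise (· ≥ ·)) (hk1 : 1 ≤ k)
    (hk : k ≤ l.length + 1) (hle : k ≤ l.length → x ≤ Ikpart l k)
    (hge : Ikpart l (k - 1) ≤ x) :
    (l.insertIdx (l.length + 1 - k) x).Pairwise (· ≥ ·) := by
  have hx_le : ∀ i, i < l.length + 1 - k → x ≤ l.getD i 0 := fun i hi =>
    (hle (by omega)).trans (getD_antitone hs (by omega) (by omega))
  have hx_ge : ∀ j, l.length + 1 - k ≤ j → j < l.length → l.getD j 0 ≤ x :=
    fun j hj hjl => (getD_antitone hs (i := l.length - (k - 1)) (by omega) hjl).trans hge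
  have hlen : (l.insertIdx (l.length + 1 - k) x).length = l.length + 1 :=
    List.length_insertIdx_of_le_length (by omega) x
  rw [List.pairwise_iff_getElem]
  intro i j hi hj hij
  simp only [List.getElem_insertIdx, ← List.getD_eq_getElem l 0]
  split_ifs
  all_goals first
    | omega
    | exact getD_antitone hs (by omega) (by omega)
    | exact hx_le _ (by omega)
    | exact hx_ge _ (by omega) (by omega)

end RedParts

section States

abbrev Triple := List ℕ × List ℕ × List ℕ

def totalSize (s : Triple) : ℕ := s.1.sum + s.2.1.sum + s.2.2.sum

def HasIk (b rd : List ℕ) : Prop := b ≠ [] ∧ Kpart b ≤ rd.length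

def kIk (b rd : List ℕ) : ℕ := Kpart b + Ikpart rd (Kpart b)

def numBigParts (g : List ℕ) : ℕ := g.length - g.count 1

structure Admissible (R : ℕ) (b rd g : List ℕ) : Prop where
  black : IsPtn b
  red : IsPtn rd
  green : MemB (R + 1) (R + 1) g
  length_le : HasIk b rd → g.length ≤ kIk b rd
  le_of_memB : MemB R R g → HasIk b rd → R + numBigParts g ≤ kIk b rd

def Strippable (R : ℕ) (b rd g : List ℕ) : Prop :=
  HasIk b rd ∧ kIk b rd ≤ R + numBigParts g

variable {R : ℕ} {b rd g : List ℕ}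

lemma memF_iff :
    MemF R b rd g ↔ IsPtn b ∧ IsPtn rd ∧ MemB R R g ∧
      (HasIk b rd → R + numBigParts g ≤ kIk b rd) := by
  unfold MemF HasIk kIk numBigParts
  constructor
  · rintro ⟨hb, hrd, -, hg, hcase⟩
    refine ⟨hb, hrd, hg, fun ⟨hbne, hk⟩ => ?_⟩
    have hk1 := hb.one_le_Kpart hbne
    rcases hcase with (h | rfl) | ⟨-, -, rfl, h⟩ | ⟨-, -, -, h⟩
    · exact absurd h hbne
    · rw [List.length_nil] at hk
      omega
    · rw [List.length_nil, List.count_nil]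
      omega
    · omega
  · rintro ⟨hb, hrd, hg, h⟩
    refine ⟨hb, hrd, hg.1, hg, ?_⟩
    by_cases hbne : b = []
    · exact Or.inl (Or.inl hbne)
    by_cases hrne : rd = []
    · exact Or.inl (Or.inr hrne)
    have hk1 := hb.one_le_Kpart hbne
    right
    by_cases hk : Kpart b ≤ rd.length
    · have := h ⟨hbne, hk⟩
      rcases eq_or_ne g [] with rfl | hgne
      · rw [List.length_nil, List.count_nil] at this
        exact Or.inl ⟨hbne, hrne, rfl, Or.inr ⟨hk, by omega⟩⟩
      · exact Or.inr ⟨hbne, hrne, hgne, Or.inr ⟨hk, by omega, by omega⟩⟩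
    · rcases eq_or_ne g [] with rfl | hgne
      · exact Or.inl ⟨hbne, hrne, rfl, Or.inl (by omega)⟩
      · exact Or.inr ⟨hbne, hrne, hgne, Or.inl (by omega)⟩

lemma memF_iff_admissible_and_memB (hR : 1 ≤ R) :
    MemF R b rd g ↔ Admissible R b rd g ∧ MemB R R g := by
  rw [memF_iff]
  constructor
  · rintro ⟨hb, hrd, hg, h⟩
    have hwin := ((memB_iff R hR).1 hg).2
    refine ⟨⟨hb, hrd, (memB_iff (R + 1) (by omega)).2 ⟨hg.1, fun v hv => ?_⟩, fun hk => ?_,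
      fun _ => h⟩, hg⟩
    · have := hwin v hv
      omega
    · have := h hk
      have := hg.2.2
      unfold numBigParts at *
      omega
  · rintro ⟨hA, hg⟩
    exact ⟨hA.black, hA.red, hg, hA.le_of_memB hg⟩

lemma memF_succ_iff_admissible_and_not_strippable (hR : 1 ≤ R) :
    MemF (R + 1) b rd g ↔ Admissible R b rd g ∧ ¬ Strippable R b rd g := by
  rw [memF_iff]
  constructor
  · rintro ⟨hb, hrd, hg, h⟩
    have hone := ((memB_iff (R + 1) (by omega)).1 hg).2 1 le_rfl
    have hc : g.count 1 ≤ g.length := List.count_le_length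
    refine ⟨⟨hb, hrd, hg, fun hk => ?_, fun _ hk => ?_⟩, fun ⟨hk, hle⟩ => ?_⟩
    all_goals
      have := h hk
      unfold numBigParts at *
      omega
  · rintro ⟨hA, hS⟩
    refine ⟨hA.black, hA.red, hA.green, fun hk => ?_⟩
    by_contra! hlt
    exact hS ⟨hk, by omega⟩

end States

section Strip

variable {R : ℕ} {b rd g : List ℕ}

def strip : Triple → Triple
  | (b, rd, g) => (b.dropLast, rd.eraseIdx (rd.length - Kpart b), shiftUp (kIk b rd) g)

lemma HasIk.bounds (hb : IsPtn b) (hr : IsPtn rd) (h : HasIk b rd) :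
    1 ≤ Kpart b ∧ Kpart b ≤ rd.length ∧ 1 ≤ Ikpart rd (Kpart b) :=
  have hk := hb.one_le_Kpart h.1
  ⟨hk, h.2, hr.one_le_Ikpart hk h.2⟩

lemma totalSize_strip (hA : Admissible R b rd g) (hS : Strippable R b rd g) :
    totalSize (strip (b, rd, g)) = totalSize (b, rd, g) := by
  obtain ⟨hk1, hk, -⟩ := hS.1.bounds hA.black hA.red
  have hb : b.dropLast.sum + Kpart b = b.sum := by
    simpa using congrArg List.sum (dropLast_append_Kpart hS.1.1)
  have hrd := sum_eraseIdx_add_getElem (l := rd) (p := rd.length - Kpart b) (by omega)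
  rw [← Ikpart_eq_getElem hk1 hk] at hrd
  have hg := sum_shiftUp (hA.length_le hS.1)
  simp only [totalSize, strip, kIk] at hg ⊢
  omega

lemma kIk_le_kIk_strip (hA : Admissible R b rd g) (hS : Strippable R b rd g)
    (hS' : HasIk b.dropLast (rd.eraseIdx (rd.length - Kpart b))) :
    kIk b rd ≤ kIk b.dropLast (rd.eraseIdx (rd.length - Kpart b)) := by
  obtain ⟨hk1, hk, -⟩ := hS.1.bounds hA.black hA.red
  have hle : Kpart b ≤ Kpart b.dropLast := Kpart_le_Kpart_dropLast hA.black.1 hS'.1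
  have hlen := hS'.2
  rw [List.length_eraseIdx_of_lt (by omega)] at hlen
  unfold kIk
  rw [Ikpart_eraseIdx_of_ge hk1 hle (by omega)]
  have := Ikpart_mono hA.red.1 (a := Kpart b) (b := Kpart b.dropLast + 1) (by omega) (by omega)
  omega

lemma not_memB_strip (hR : 1 ≤ R) (hA : Admissible R b rd g) (hS : Strippable R b rd g) :
    ¬ MemB R R (shiftUp (kIk b rd) g) := by
  have hg := hA.green.1
  intro hB
  have hwin := ((memB_iff R hR).1 hB).2
  by_cases hgB : MemB R R g
  · -- `k + i_k = R + numBigParts g`, which makes the new window `{1, 2}` hold exactly `R` parts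
    have h1 := hA.le_of_memB hgB hS.1
    have h2 := hS.2
    have := hwin 1 le_rfl
    rw [count_one_shiftUp _ hg, count_succ_shiftUp _ le_rfl] at this
    have := List.count_le_length (a := 1) (l := g)
    unfold numBigParts at h1 h2
    omega
  · obtain ⟨v, hv, hRv⟩ := exists_window_of_not_memB (by omega) hg hgB
    have := hwin (v + 1) (by omega)
    rw [count_succ_shiftUp _ hv, count_succ_shiftUp _ (by omega)] at this
    omega

lemma admissible_strip (hR : 1 ≤ R) (hA : Admissible R b rd g) (hS : Strippable R b rd g) :
    Admissible R b.dropLast (rd.eraseIdx (rd.length - Kpart b)) (shiftUp (kIk b rd) g) := by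
  have hg := hA.green.1
  have hwin := ((memB_iff (R + 1) (by omega)).1 hA.green).2
  have hlen := hA.length_le hS.1
  refine ⟨hA.black.sublist (List.dropLast_sublist b), hA.red.sublist (List.eraseIdx_sublist _ _),
    (memB_iff (R + 1) (by omega)).2 ⟨hg.shiftUp _, fun v hv => ?_⟩, fun hS' => ?_,
    fun hB => absurd hB (not_memB_strip hR hA hS)⟩
  · rcases hv.eq_or_lt with rfl | hv
    · rw [count_one_shiftUp _ hg, count_succ_shiftUp _ le_rfl]
      have := hS.2
      have := List.count_le_length (a := 1) (l := g)
      unfold numBigParts at *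
      omega
    · obtain ⟨w, rfl⟩ : ∃ w, v = w + 1 := ⟨v - 1, by omega⟩
      rw [count_succ_shiftUp _ (by omega), count_succ_shiftUp _ (by omega)]
      have := hwin w (by omega)
      omega
  · rw [length_shiftUp hlen]
    exact kIk_le_kIk_strip hA hS hS'

end Strip

section PeelIndex

variable {rd : List ℕ} {m : ℕ}

/-- For `k = peelIndex rd m` the red part `m - k` fits in as the new `k`-th smallest red part;
`k = 1` always qualifies when `1 ≤ m`, as `Ikpart rd 0 = 0`. -/
def peelIndex (rd : List ℕ) (m : ℕ) : ℕ :=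
  Nat.findGreatest (fun k => k + Ikpart rd (k - 1) ≤ m) (rd.length + 1)

lemma peelIndex_le_length_add_one : peelIndex rd m ≤ rd.length + 1 :=
  Nat.findGreatest_le _

lemma one_le_peelIndex (hm : 1 ≤ m) : 1 ≤ peelIndex rd m :=
  Nat.le_findGreatest (by omega) (by simpa [Ikpart_zero] using hm)

lemma peelIndex_add_Ikpart_le (hm : 1 ≤ m) :
    peelIndex rd m + Ikpart rd (peelIndex rd m - 1) ≤ m :=
  Nat.findGreatest_spec (P := fun k => k + Ikpart rd (k - 1) ≤ m) (m := 1) (by omega)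
    (by simpa [Ikpart_zero] using hm)

lemma le_peelIndex_add_Ikpart (h : peelIndex rd m ≤ rd.length) :
    m ≤ peelIndex rd m + Ikpart rd (peelIndex rd m) := by
  have := Nat.findGreatest_is_greatest (P := fun k => k + Ikpart rd (k - 1) ≤ m)
    (Nat.lt_succ_self (peelIndex rd m)) (by omega)
  simp only [Nat.succ_sub_one, not_le] at this
  omega

lemma peelIndex_lt (hr : IsPtn rd) (hm : 2 ≤ m) : peelIndex rd m < m := by
  have hle := peelIndex_add_Ikpart_le (rd := rd) (by omega : 1 ≤ m)
  have := peelIndex_le_length_add_one (rd := rd) (m := m)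
  by_contra! h
  have := hr.one_le_Ikpart (k := peelIndex rd m - 1) (by omega) (by omega)
  omega

lemma peelIndex_eraseIdx (hs : rd.Pairwise (· ≥ ·)) {k : ℕ} (hk1 : 1 ≤ k)
    (hk : k ≤ rd.length) :
    peelIndex (rd.eraseIdx (rd.length - k)) (k + Ikpart rd k) = k := by
  rw [peelIndex, List.length_eraseIdx_of_lt (by omega), Nat.sub_add_cancel (by omega),
    Nat.findGreatest_eq_iff]
  refine ⟨hk, fun _ => ?_, fun n hkn hn => ?_⟩
  · rcases hk1.eq_or_lt with rfl | hk1
    · simp [Ikpart_zero]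
    · rw [Ikpart_eraseIdx_of_lt hk (by omega) (by omega)]
      have := Ikpart_mono hs (a := k - 1) (b := k) (by omega) hk
      omega
  · rw [Ikpart_eraseIdx_of_ge hk1 (by omega) (by omega), Nat.sub_add_cancel (by omega)]
    have := Ikpart_mono hs (a := k) (b := n) (by omega) hn
    omega

end PeelIndex

section Peel

variable {R : ℕ} {b rd g : List ℕ}

def peel : Triple → Triple
  | (b, rd, g) =>
    (b ++ [peelIndex rd g.length],
      rd.insertIdx (rd.length + 1 - peelIndex rd g.length) (g.length - peelIndex rd g.length),
      shiftDown g)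

lemma two_le_length_of_not_memB (hR : 2 ≤ R) (hg : IsPtn g) (hB : ¬ MemB R R g) :
    2 ≤ g.length := by
  obtain ⟨v, -, hv⟩ := exists_window_of_not_memB (by omega) hg hB
  have := count_add_count_le_length (l := g) (show v ≠ v + 1 by omega)
  omega

lemma peelIndex_le_Kpart (hA : Admissible R b rd g) (hbne : b ≠ []) (hm : 1 ≤ g.length) :
    peelIndex rd g.length ≤ Kpart b := by
  have hspec := peelIndex_add_Ikpart_le (rd := rd) hm
  have := peelIndex_le_length_add_one (rd := rd) (m := g.length)
  by_contra! h
  have hlen := hA.length_le ⟨hbne, by omega⟩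
  have := Ikpart_mono hA.red.1 (a := Kpart b) (b := peelIndex rd g.length - 1) (by omega)
    (by omega)
  unfold kIk at hlen
  omega

lemma kIk_peel (hR : 2 ≤ R) (hA : Admissible R b rd g) (hB : ¬ MemB R R g) :
    kIk (peel (b, rd, g)).1 (peel (b, rd, g)).2.1 = g.length := by
  have hm := two_le_length_of_not_memB hR hA.green.1 hB
  have := peelIndex_lt hA.red hm
  simp only [peel, kIk, Kpart_append_singleton]
  rw [Ikpart_insertIdx_self _ (one_le_peelIndex (by omega)) peelIndex_le_length_add_one]
  omega

lemma totalSize_peel (hR : 2 ≤ R) (hA : Admissible R b rd g) (hB : ¬ MemB R R g) :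
    totalSize (peel (b, rd, g)) = totalSize (b, rd, g) := by
  have hm := two_le_length_of_not_memB hR hA.green.1 hB
  have := peelIndex_lt hA.red hm
  have := sum_shiftDown hA.green.1.2
  have := one_le_peelIndex (rd := rd) (by omega : 1 ≤ g.length)
  simp only [totalSize, peel, List.sum_append, List.sum_singleton]
  rw [sum_insertIdx (by omega)]
  omega

lemma strippable_peel (hR : 2 ≤ R) (hA : Admissible R b rd g) (hB : ¬ MemB R R g) :
    Strippable R (peel (b, rd, g)).1 (peel (b, rd, g)).2.1 (peel (b, rd, g)).2.2 := by
  have hone : g.count 1 + g.count 2 < R + 1 :=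
    ((memB_iff (R + 1) (by omega)).1 hA.green).2 1 le_rfl
  have := count_add_count_le_length (l := g) (show 1 ≠ 2 by omega)
  have hm := two_le_length_of_not_memB hR hA.green.1 hB
  have := one_le_peelIndex (rd := rd) (by omega : 1 ≤ g.length)
  refine ⟨⟨by simp [peel], ?_⟩, ?_⟩
  · simp only [peel, Kpart_append_singleton]
    rw [List.length_insertIdx_of_le_length (by omega)]
    exact peelIndex_le_length_add_one
  · rw [kIk_peel hR hA hB]
    simp only [peel, numBigParts, length_shiftDown, count_one_shiftDown]
    omega

lemma admissible_peel (hR : 2 ≤ R) (hA : Admissible R b rd g) (hB : ¬ MemB R R g) :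
    Admissible R (peel (b, rd, g)).1 (peel (b, rd, g)).2.1 (peel (b, rd, g)).2.2 := by
  have hkIk := kIk_peel hR hA hB
  dsimp only [peel] at hkIk ⊢
  have hg := hA.green.1
  have hwin := ((memB_iff (R + 1) (by omega)).1 hA.green).2
  have hm := two_le_length_of_not_memB hR hg hB
  have hk1 : 1 ≤ peelIndex rd g.length := one_le_peelIndex (by omega)
  have hk := peelIndex_le_length_add_one (rd := rd) (m := g.length)
  have hklt := peelIndex_lt hA.red hm
  have hred : IsPtn (rd.insertIdx (rd.length + 1 - peelIndex rd g.length)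
      (g.length - peelIndex rd g.length)) := by
    refine ⟨pairwise_insertIdx hA.red.1 hk1 hk (fun h => ?_) ?_, fun x hx => ?_⟩
    · have := le_peelIndex_add_Ikpart h
      omega
    · have := peelIndex_add_Ikpart_le (rd := rd) (by omega : 1 ≤ g.length)
      omega
    · rcases List.mem_insertIdx (by omega) |>.1 hx with rfl | hx
      · omega
      · exact hA.red.2 x hx
  have hblack : IsPtn (b ++ [peelIndex rd g.length]) := by
    refine ⟨List.pairwise_append.2 ⟨hA.black.1, by simp, fun a ha c hc => ?_⟩,
      fun x hx => ?_⟩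
    · rw [List.mem_singleton.1 hc]
      have hbne : b ≠ [] := List.ne_nil_of_mem ha
      exact (peelIndex_le_Kpart hA hbne (by omega)).trans (Kpart_le_of_mem hA.black.1 ha)
    · rcases List.mem_append.1 hx with hx | hx
      · exact hA.black.2 x hx
      · rw [List.mem_singleton.1 hx]
        omega
  refine ⟨hblack, hred, (memB_iff (R + 1) (by omega)).2 ⟨hg.shiftDown, fun v hv => ?_⟩,
    fun _ => ?_, fun hB' _ => ?_⟩
  · rw [count_shiftDown hv, count_shiftDown (by omega)]
    exact hwin (v + 1) (by omega)
  · rw [hkIk, length_shiftDown]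
    omega
  · -- the window of `g` violating `B_{R,R}` must be `{1, 2}`, since it would otherwise
    -- survive in `shiftDown g`
    have hwin' := ((memB_iff R (by omega)).1 hB').2
    obtain ⟨v, hv, hRv⟩ := exists_window_of_not_memB (by omega) hg hB
    obtain rfl : v = 1 := by
      by_contra hv1
      have := hwin' (v - 1) (by omega)
      rw [count_shiftDown (by omega), count_shiftDown (by omega),
        show v - 1 + 1 = v by omega] at this
      omega
    simp only [Nat.reduceAdd] at hRv
    have := count_add_count_le_length (l := g) (show 1 ≠ 2 by omega)
    rw [hkIk, numBigParts, length_shiftDown, count_one_shiftDown]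
    omega

lemma strip_peel (hR : 2 ≤ R) (hA : Admissible R b rd g) (hB : ¬ MemB R R g) :
    strip (peel (b, rd, g)) = (b, rd, g) := by
  have hm := two_le_length_of_not_memB hR hA.green.1 hB
  have := one_le_peelIndex (rd := rd) (by omega : 1 ≤ g.length)
  have hk := kIk_peel hR hA hB
  simp only [peel] at hk ⊢
  simp only [strip, hk, List.dropLast_concat, Kpart_append_singleton,
    List.length_insertIdx_of_le_length (show rd.length + 1 - peelIndex rd g.length ≤ rd.length by
      omega), List.eraseIdx_insertIdx_self, shiftUp_shiftDown hA.green.1]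

lemma peel_strip (hA : Admissible R b rd g) (hS : Strippable R b rd g) :
    peel (strip (b, rd, g)) = (b, rd, g) := by
  obtain ⟨hk1, hk, -⟩ := hS.1.bounds hA.black hA.red
  have hlen := hA.length_le hS.1
  simp only [strip, peel]
  rw [length_shiftUp hlen, kIk, peelIndex_eraseIdx hA.red.1 hk1 hk,
    List.length_eraseIdx_of_lt (by omega), show rd.length - 1 + 1 - Kpart b = rd.length - Kpart b by
      omega, Nat.add_sub_cancel_left, Ikpart_eq_getElem hk1 hk, List.insertIdx_eraseIdx_getElem,
    dropLast_append_Kpart hS.1.1, shiftDown_shiftUp hA.green.1]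

end Peel

section Counting

lemma finite_isPtn_sum_le (n : ℕ) : {l : List ℕ | IsPtn l ∧ l.sum ≤ n}.Finite := by
  refine ((List.finite_length_le (Fin (n + 1)) n).image (List.map Fin.val)).subset ?_
  rintro l ⟨hl, hsum⟩
  have hle : ∀ x ∈ l, x ≤ n := fun x hx => (List.le_sum_of_mem hx).trans hsum
  refine ⟨l.map (Fin.ofNat (n + 1)), ?_, ?_⟩
  · have := List.length_le_sum_of_one_le l hl.2
    simp only [Set.mem_ofPred_eq, List.length_map]
    omega
  · rw [List.map_map]
    conv_rhs => rw [← List.map_id l]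
    exact List.map_congr_left fun x hx => by
      simp [Nat.mod_eq_of_lt (Nat.lt_succ_of_le (hle x hx))]

def admissibleOfTotal (R n : ℕ) : Set Triple :=
  {s | Admissible R s.1 s.2.1 s.2.2 ∧ totalSize s = n}

lemma finite_admissibleOfTotal (R n : ℕ) : (admissibleOfTotal R n).Finite := by
  have h := finite_isPtn_sum_le n
  refine (h.prod (h.prod h)).subset ?_
  rintro ⟨b, rd, g⟩ ⟨hA, htot⟩
  simp only [totalSize] at htot
  refine ⟨⟨hA.black, ?_⟩, ⟨hA.red, ?_⟩, ⟨hA.green.1, ?_⟩⟩ <;> dsimp only <;> omega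

lemma ncard_strippable_eq_ncard_not_memB {R : ℕ} (hR : 2 ≤ R) (n : ℕ) :
    (admissibleOfTotal R n ∩ {s | Strippable R s.1 s.2.1 s.2.2}).ncard =
      (admissibleOfTotal R n \ {s | MemB R R s.2.2}).ncard := by
  refine Set.BijOn.ncard_eq (f := strip) (Set.InvOn.bijOn (f' := peel) ⟨?_, ?_⟩ ?_ ?_)
  · rintro ⟨b, rd, g⟩ ⟨⟨hA, -⟩, hS⟩
    exact peel_strip hA hS
  · rintro ⟨b, rd, g⟩ ⟨⟨hA, -⟩, hB⟩
    exact strip_peel hR hA hB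
  · rintro ⟨b, rd, g⟩ ⟨⟨hA, htot⟩, hS⟩
    exact ⟨⟨admissible_strip (by omega) hA hS, (totalSize_strip hA hS).trans htot⟩,
      not_memB_strip (by omega) hA hS⟩
  · rintro ⟨b, rd, g⟩ ⟨⟨hA, htot⟩, hB⟩
    exact ⟨⟨admissible_peel hR hA hB, (totalSize_peel hR hA hB).trans htot⟩,
      strippable_peel hR hA hB⟩

lemma Fcount_eq_ncard_inter_memB {R : ℕ} (hR : 1 ≤ R) (n : ℕ) :
    Fcount R n = (admissibleOfTotal R n ∩ {s | MemB R R s.2.2}).ncard := by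
  refine congrArg Set.ncard (Set.ext fun ⟨b, rd, g⟩ => ?_)
  simp only [Set.mem_ofPred_eq, Set.mem_inter_iff, admissibleOfTotal, totalSize,
    memF_iff_admissible_and_memB hR]
  tauto

lemma Fcount_succ_eq_ncard_sdiff_strippable {R : ℕ} (hR : 1 ≤ R) (n : ℕ) :
    Fcount (R + 1) n = (admissibleOfTotal R n \ {s | Strippable R s.1 s.2.1 s.2.2}).ncard := by
  refine congrArg Set.ncard (Set.ext fun ⟨b, rd, g⟩ => ?_)
  simp only [Set.mem_ofPred_eq, Set.mem_sdiff, admissibleOfTotal, totalSize,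
    memF_succ_iff_admissible_and_not_strippable hR]
  tauto

end Counting

/-- `F_r(n)` is independent of `r ≥ 2`. -/
theorem Fcount_succ (r n : ℕ) (hr : 2 ≤ r) : Fcount r n = Fcount (r + 1) n := by
  have hfin := finite_admissibleOfTotal r n
  have hB := Set.ncard_inter_add_ncard_sdiff_eq_ncard _ {s : Triple | MemB r r s.2.2} hfin
  have hS := Set.ncard_inter_add_ncard_sdiff_eq_ncard _
    {s : Triple | Strippable r s.1 s.2.1 s.2.2} hfin
  have hbij := ncard_strippable_eq_ncard_not_memB hr n
  rw [Fcount_eq_ncard_inter_memB (by omega), Fcount_succ_eq_ncard_sdiff_strippable (by omega)]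
  omega
end

section
/- For every integer r ≥ 2, Σ_{m=0}^{r−1} X_m = 1/(q)_{r−1} as formal power series; equivalently, the coefficient of q^n in Σ_{m=0}^{r−1} X_m equals the number of partitions of n with at most r−1 parts. -/
/-! Writing `N_1 ≥ ⋯ ≥ N_L` (`L = r - 1`) for the summation tuple, `Σ_{m<r} X_m` sums the
Andrews–Gordon weight `q^{ΣN_j²} / Π (q)_{N_j - N_{j+1}}` over all partitions with at most `L`
parts and size at most `L`. We compute in `ℚ((X))`, where `q = X` has infinite order, so that the
`q`-binomials `[n, k] = (q)_n / ((q)_k (q)_{n-k})` make sense. Splitting off the largest part `s`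
and using the `q`-Vandermonde identity `[t + B, t] = Σ_s q^{s²} [t, s] [B, s]`, induction on the
number of parts gives
  `Σ q^{ΣN_j²} / ((q)_{t - N_1} Π (q)_{N_j - N_{j+1}}) = [t + B, t] / (q)_t`
over partitions with parts `≤ t` and size `≤ B`, as long as the bound on the number of parts is
not binding. Hence the sum is `Σ_s q^{s²} [L, s] / (q)_s`, which is `1 / (q)_L` by the Durfee
square identity. -/

open PowerSeries Finset

/-- `(q)_n = (1−q)(1−q²)⋯(1−qⁿ)`, with `(q)_0 = 1`. -/
noncomputable def qPoch (n : ℕ) : PowerSeries ℚ :=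
  ∏ j ∈ Finset.range n, (1 - (X : PowerSeries ℚ) ^ (j + 1))

/-- extend a tuple `(∂_1, …, ∂_{r−1})` by zero. -/
def dext (r : ℕ) (d : Fin (r - 1) → ℕ) (j : ℕ) : ℕ :=
  if h : j < r - 1 then d ⟨j, h⟩ else 0

/-- `X_m`: the sum over tuples `∂_1 ≥ ⋯ ≥ ∂_{r−1} ≥ 0` with `∂_1+⋯+∂_{r−1}=m` of
`q^{∂_1²+⋯+∂_{r−1}²} / ((q)_{∂_1−∂_2} ⋯ (q)_{∂_{r−2}−∂_{r−1}} (q)_{∂_{r−1}})`. -/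
noncomputable def Xm (r m : ℕ) : PowerSeries ℚ :=
  ∑ d ∈ (Finset.Nat.antidiagonalTuple (r - 1) m).filter
      (fun d => ∀ a b : Fin (r - 1), a ≤ b → d b ≤ d a),
    (X : PowerSeries ℚ) ^ (∑ j ∈ Finset.range (r - 1), (dext r d j) ^ 2) *
      ∏ j ∈ Finset.range (r - 1), (qPoch (dext r d j - dext r d (j + 1)))⁻¹

section QBinomial

variable {K : Type*} [Field K] (q : K)

def qPochhammer (n : ℕ) : K := ∏ j ∈ range n, (1 - q ^ (j + 1))

def qBinom (n k : ℕ) : K :=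
  if k ≤ n then qPochhammer q n / (qPochhammer q k * qPochhammer q (n - k)) else 0

@[simp]
lemma qPochhammer_zero : qPochhammer q 0 = 1 := prod_range_zero _

lemma qPochhammer_succ (n : ℕ) : qPochhammer q (n + 1) = qPochhammer q n * (1 - q ^ (n + 1)) :=
  prod_range_succ _ _

variable {q}

lemma one_sub_pow_succ_ne_zero (hq : ¬IsOfFinOrder q) (n : ℕ) : 1 - q ^ (n + 1) ≠ 0 :=
  sub_ne_zero.2 fun h => hq (isOfFinOrder_iff_pow_eq_one.2 ⟨n + 1, n.succ_pos, h.symm⟩)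

lemma qPochhammer_ne_zero (hq : ¬IsOfFinOrder q) (n : ℕ) : qPochhammer q n ≠ 0 :=
  prod_ne_zero_iff.2 fun j _ => one_sub_pow_succ_ne_zero hq j

lemma qBinom_of_lt {n k : ℕ} (h : n < k) : qBinom q n k = 0 := if_neg (by omega)

lemma qBinom_of_le {n k : ℕ} (h : k ≤ n) :
    qBinom q n k = qPochhammer q n / (qPochhammer q k * qPochhammer q (n - k)) := if_pos h

lemma qBinom_add_left (k c : ℕ) :
    qBinom q (k + c) k = qPochhammer q (k + c) / (qPochhammer q k * qPochhammer q c) := by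
  rw [qBinom_of_le (k.le_add_right c), Nat.add_sub_cancel_left]

lemma qBinom_zero_right (hq : ¬IsOfFinOrder q) (n : ℕ) : qBinom q n 0 = 1 := by
  simpa [div_self (qPochhammer_ne_zero hq n)] using qBinom_add_left (q := q) 0 n

lemma qBinom_self (hq : ¬IsOfFinOrder q) (n : ℕ) : qBinom q n n = 1 := by
  simpa [div_self (qPochhammer_ne_zero hq n)] using qBinom_add_left (q := q) n 0

lemma qBinom_sub {n k : ℕ} (h : k ≤ n) : qBinom q n (n - k) = qBinom q n k := by
  rw [qBinom, qBinom, if_pos (n.sub_le k), if_pos h, Nat.sub_sub_self h, mul_comm]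

lemma qBinom_succ_succ (hq : ¬IsOfFinOrder q) (n k : ℕ) :
    qBinom q (n + 1) (k + 1) = q ^ (k + 1) * qBinom q n (k + 1) + qBinom q n k := by
  rcases lt_trichotomy n k with h | rfl | h
  · rw [qBinom_of_lt (by omega), qBinom_of_lt (by omega), qBinom_of_lt h]
    ring
  · rw [qBinom_self hq, qBinom_self hq, qBinom_of_lt n.lt_succ_self]
    ring
  obtain ⟨c, rfl⟩ := Nat.exists_eq_add_of_lt h
  have h₁ := qBinom_add_left (q := q) (k + 1) (c + 1)
  have h₂ := qBinom_add_left (q := q) (k + 1) c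
  have h₃ := qBinom_add_left (q := q) k (c + 1)
  rw [show k + 1 + (c + 1) = k + c + 1 + 1 by ring] at h₁
  rw [show k + 1 + c = k + c + 1 by ring] at h₂
  rw [show k + (c + 1) = k + c + 1 by ring] at h₃
  rw [h₁, h₂, h₃, qPochhammer_succ q (k + c + 1), qPochhammer_succ q k, qPochhammer_succ q c]
  have := qPochhammer_ne_zero hq (k + c + 1)
  have := qPochhammer_ne_zero hq k
  have := qPochhammer_ne_zero hq c
  have := one_sub_pow_succ_ne_zero hq k
  have := one_sub_pow_succ_ne_zero hq c
  field_simp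
  ring

lemma qBinom_succ_succ' (hq : ¬IsOfFinOrder q) (n k : ℕ) :
    qBinom q (n + 1) (k + 1) = qBinom q n (k + 1) + q ^ (n - k) * qBinom q n k := by
  rcases lt_trichotomy n k with h | rfl | h
  · rw [qBinom_of_lt (by omega), qBinom_of_lt (by omega), qBinom_of_lt h]
    ring
  · rw [qBinom_self hq, qBinom_self hq, qBinom_of_lt n.lt_succ_self, Nat.sub_self]
    ring
  obtain ⟨j, rfl⟩ := Nat.exists_eq_add_of_lt h
  have mirror {n a b : ℕ} (hab : a + b = n) : qBinom q n a = qBinom q n b := by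
    rw [← qBinom_sub (by omega : b ≤ n), show n - b = a by omega]
  rw [mirror (show k + 1 + (j + 1) = k + j + 1 + 1 by ring), qBinom_succ_succ hq,
    mirror (show (j + 1) + k = k + j + 1 by ring), mirror (show j + (k + 1) = k + j + 1 by ring),
    show k + j + 1 - k = j + 1 by omega]
  ring

lemma qBinom_vandermonde (hq : ¬IsOfFinOrder q) (B : ℕ) : ∀ k c : ℕ,
    qBinom q (k + c + B) k =
      ∑ j ∈ range (k + 1), q ^ (j * (c + j)) * qBinom q (k + c) (k - j) * qBinom q B j := by
  induction B with
  | zero =>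
    intro k c
    rw [sum_eq_single 0 (fun j _ hj => by rw [qBinom_of_lt (Nat.pos_of_ne_zero hj), mul_zero])
      (fun h => absurd (mem_range.2 k.succ_pos) h)]
    simp [qBinom_self hq]
  | succ B ih =>
    rintro (_ | k) c
    · simp [qBinom_zero_right hq]
    have ih' := ih k (c + 1)
    rw [show k + (c + 1) = k + 1 + c by ring] at ih'
    rw [show k + 1 + c + (B + 1) = k + 1 + c + B + 1 by ring, qBinom_succ_succ' hq, ih (k + 1) c,
      ih', show k + 1 + c + B - k = c + B + 1 by omega, sum_range_succ' _ (k + 1),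
      sum_range_succ' _ (k + 1)]
    simp only [qBinom_succ_succ' hq B, qBinom_zero_right hq, mul_add, sum_add_distrib, mul_sum,
      Nat.add_sub_add_right]
    rw [add_right_comm]
    congr 2
    refine sum_congr rfl fun i _ => ?_
    rcases lt_or_ge B i with hi | hi
    · simp [qBinom_of_lt hi]
    obtain ⟨b, rfl⟩ := Nat.exists_eq_add_of_le hi
    rw [Nat.add_sub_cancel_left]
    ring

lemma qBinom_add_left_vandermonde (hq : ¬IsOfFinOrder q) (t B : ℕ) :
    qBinom q (t + B) t = ∑ s ∈ range (t + 1), q ^ (s * s) * qBinom q t s * qBinom q B s := by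
  have h := qBinom_vandermonde hq B t 0
  simp only [add_zero, zero_add] at h
  refine h.trans (sum_congr rfl fun s hs => ?_)
  rw [qBinom_sub (Nat.le_of_lt_succ (mem_range.1 hs))]

lemma sum_qBinom_durfee (hq : ¬IsOfFinOrder q) (N : ℕ) : ∀ a : ℕ,
    ∑ u ∈ range (N + 1), q ^ (u * (u + a)) * qBinom q N u / qPochhammer q (u + a) =
      (qPochhammer q (N + a))⁻¹ := by
  induction N with
  | zero => simp [qBinom_self hq]
  | succ N ih =>
    intro a
    set A := fun u => q ^ (u * (u + (a + 1))) * qBinom q N u / qPochhammer q (u + (a + 1))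
    set C := fun u => q ^ ((u + 1) * (u + (a + 1))) * qBinom q N u / qPochhammer q (u + (a + 1))
    have telescope (u : ℕ) :
        q ^ (u * (u + a)) * (q ^ u * qBinom q N u) / qPochhammer q (u + a) = A u - C u := by
      have := qPochhammer_ne_zero hq (u + a)
      have := one_sub_pow_succ_ne_zero hq (u + a)
      simp only [A, C, show u + (a + 1) = u + a + 1 by ring, qPochhammer_succ]
      field_simp
      ring
    calc ∑ u ∈ range (N + 1 + 1), q ^ (u * (u + a)) * qBinom q (N + 1) u / qPochhammer q (u + a)
        = ∑ u ∈ range (N + 2), q ^ (u * (u + a)) * (q ^ u * qBinom q N u) / qPochhammer q (u + a)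
            + ∑ u ∈ range (N + 1), C u := by
          rw [sum_range_succ', sum_range_succ' _ (N + 1)]
          simp only [qBinom_succ_succ hq, mul_add, add_div, sum_add_distrib, qBinom_zero_right hq,
            C, show ∀ u, u + 1 + a = u + (a + 1) from fun u => by ring]
          ring
      _ = ∑ u ∈ range (N + 1), A u := by
          rw [sum_congr rfl fun u _ => telescope u, sum_sub_distrib, sum_range_succ A,
            sum_range_succ C]
          simp only [A, C, qBinom_of_lt N.lt_succ_self]
          ring
      _ = (qPochhammer q (N + 1 + a))⁻¹ := by rw [ih (a + 1), add_assoc, add_comm 1 a]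

end QBinomial

lemma antitone_finCons_iff {α : Type*} [Preorder α] {n : ℕ} {s : α} {d : Fin n → α} :
    Antitone (Fin.cons s d : Fin (n + 1) → α) ↔ (∀ i, d i ≤ s) ∧ Antitone d := by
  refine ⟨fun h => ⟨fun i => h (Fin.zero_le i.succ), fun a b hab => h (Fin.succ_le_succ_iff.2 hab)⟩,
    fun ⟨hs, hd⟩ a b hab => ?_⟩
  induction b using Fin.cases with
  | zero => rw [Fin.le_zero_iff.1 hab]
  | succ j =>
    induction a using Fin.cases with
    | zero => exact hs j
    | succ i => exact hd (Fin.succ_le_succ_iff.1 hab)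

def boxedPartitions (L t B : ℕ) : Finset (Fin L → ℕ) :=
  (Fintype.piFinset fun _ => range (t + 1)).filter fun d => Antitone d ∧ ∑ i, d i ≤ B

@[simp]
lemma mem_boxedPartitions {L t B : ℕ} {d : Fin L → ℕ} :
    d ∈ boxedPartitions L t B ↔ (∀ i, d i ≤ t) ∧ Antitone d ∧ ∑ i, d i ≤ B := by
  simp [boxedPartitions]

lemma cons_mem_boxedPartitions_iff {L t B s : ℕ} {d : Fin L → ℕ} (hst : s ≤ t) (hsB : s ≤ B) :
    (Fin.cons s d : Fin (L + 1) → ℕ) ∈ boxedPartitions (L + 1) t B ↔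
      d ∈ boxedPartitions L s (B - s) := by
  simp only [mem_boxedPartitions, Fin.forall_fin_succ, Fin.cons_zero, Fin.cons_succ,
    antitone_finCons_iff, Fin.sum_cons]
  constructor
  · rintro ⟨-, ⟨hds, hd⟩, hsum⟩
    exact ⟨hds, hd, by omega⟩
  · rintro ⟨hds, hd, hsum⟩
    exact ⟨⟨hst, fun i => (hds i).trans hst⟩, ⟨hds, hd⟩, by omega⟩

lemma sum_boxedPartitions_filter_head {M : Type*} [AddCommMonoid M] {L t B s : ℕ}
    (hst : s ≤ t) (hsB : s ≤ B) (f : (Fin (L + 1) → ℕ) → M) :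
    ∑ d ∈ (boxedPartitions (L + 1) t B).filter (fun d => d 0 = s), f d =
      ∑ d ∈ boxedPartitions L s (B - s), f (Fin.cons s d) := by
  refine sum_nbij' Fin.tail (fun d : Fin L → ℕ => (Fin.cons s d : Fin (L + 1) → ℕ)) (fun d hd => ?_)
    (fun d hd => ?_) (fun d hd => ?_) (fun d _ => ?_) (fun d hd => ?_)
  · obtain ⟨hd, rfl⟩ := mem_filter.1 hd
    rwa [← cons_mem_boxedPartitions_iff hst hsB, Fin.cons_self_tail]
  · exact mem_filter.2 ⟨(cons_mem_boxedPartitions_iff hst hsB).2 hd, Fin.cons_zero _ _⟩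
  · rw [← (mem_filter.1 hd).2, Fin.cons_self_tail]
  · exact Fin.tail_cons _ _
  · rw [← (mem_filter.1 hd).2, Fin.cons_self_tail]

lemma sum_range_sum_filter_antidiagonalTuple {M : Type*} [AddCommMonoid M] (L N : ℕ)
    (f : (Fin L → ℕ) → M) :
    ∑ m ∈ range (N + 1), ∑ d ∈ (Finset.Nat.antidiagonalTuple L m).filter
        (fun d => ∀ a b : Fin L, a ≤ b → d b ≤ d a), f d =
      ∑ d ∈ boxedPartitions L N N, f d := by
  rw [← sum_fiberwise_of_maps_to (g := fun d => ∑ i, d i) (t := range (N + 1))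
    fun d hd => mem_range.2 (Nat.lt_succ_of_le (mem_boxedPartitions.1 hd).2.2)]
  refine sum_congr rfl fun m hm => sum_congr ?_ fun _ _ => rfl
  ext d
  simp only [mem_filter, Finset.Nat.mem_antidiagonalTuple, mem_boxedPartitions]
  constructor
  · rintro ⟨hsum, hd⟩
    refine ⟨⟨fun i => ?_, fun a b => hd a b, ?_⟩, hsum⟩
    · have := mem_range.1 hm
      have := single_le_sum (fun j _ => Nat.zero_le (d j)) (mem_univ i)
      omega
    · have := mem_range.1 hm
      omega
  · rintro ⟨⟨-, hd, -⟩, hsum⟩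
    exact ⟨hsum, fun a b hab => hd hab⟩

def zeroExtend {L : ℕ} (d : Fin L → ℕ) (j : ℕ) : ℕ :=
  if h : j < L then d ⟨j, h⟩ else 0

@[simp]
lemma zeroExtend_cons_zero {L s : ℕ} (d : Fin L → ℕ) :
    zeroExtend (Fin.cons s d : Fin (L + 1) → ℕ) 0 = s := by
  simp [zeroExtend]

@[simp]
lemma zeroExtend_cons_succ {L s : ℕ} (d : Fin L → ℕ) (j : ℕ) :
    zeroExtend (Fin.cons s d : Fin (L + 1) → ℕ) (j + 1) = zeroExtend d j := by
  by_cases h : j < L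
  · rw [zeroExtend, zeroExtend, dif_pos (by omega), dif_pos h]
    exact Fin.cons_succ (α := fun _ => ℕ) s d ⟨j, h⟩
  · rw [zeroExtend, zeroExtend, dif_neg (by omega), dif_neg h]

section GordonWeight

variable {K : Type*} [Field K] (q : K)

def gordonWeight {L : ℕ} (d : Fin L → ℕ) : K :=
  q ^ (∑ j ∈ range L, zeroExtend d j ^ 2) *
    ∏ j ∈ range L, (qPochhammer q (zeroExtend d j - zeroExtend d (j + 1)))⁻¹

def boxedGordonWeight (t : ℕ) {L : ℕ} (d : Fin L → ℕ) : K :=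
  (qPochhammer q (t - zeroExtend d 0))⁻¹ * gordonWeight q d

lemma gordonWeight_cons {L : ℕ} (s : ℕ) (d : Fin L → ℕ) :
    gordonWeight q (Fin.cons s d : Fin (L + 1) → ℕ) = q ^ (s ^ 2) * boxedGordonWeight q s d := by
  simp only [gordonWeight, boxedGordonWeight, sum_range_succ', prod_range_succ',
    zeroExtend_cons_succ, zeroExtend_cons_zero, pow_add]
  ring

lemma boxedGordonWeight_cons (t : ℕ) {L : ℕ} (s : ℕ) (d : Fin L → ℕ) :
    boxedGordonWeight q t (Fin.cons s d : Fin (L + 1) → ℕ) =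
      (qPochhammer q (t - s))⁻¹ * (q ^ (s ^ 2) * boxedGordonWeight q s d) := by
  rw [boxedGordonWeight, zeroExtend_cons_zero, gordonWeight_cons]

lemma boxedGordonWeight_of_fin_zero (t : ℕ) (d : Fin 0 → ℕ) :
    boxedGordonWeight q t d = (qPochhammer q t)⁻¹ := by
  simp [boxedGordonWeight, gordonWeight, zeroExtend]

variable {q}

lemma sum_boxedGordonWeight (hq : ¬IsOfFinOrder q) (L : ℕ) : ∀ t B : ℕ, t = 0 ∨ B ≤ L →
    ∑ d ∈ boxedPartitions L t B, boxedGordonWeight q t d =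
      qBinom q (t + B) t / qPochhammer q t := by
  induction L with
  | zero =>
    intro t B htB
    rw [sum_eq_single_of_mem Fin.elim0
      (mem_boxedPartitions.2 ⟨fun i => i.elim0, Subsingleton.antitone _, by simp⟩)
      fun d _ hd => absurd (Subsingleton.elim d _) hd,
      boxedGordonWeight_of_fin_zero]
    rcases htB with rfl | hB
    · rw [zero_add, qBinom_zero_right hq, one_div]
    · rw [Nat.le_zero.1 hB, add_zero, qBinom_self hq, one_div]
  | succ L ih =>
    intro t B htB
    rw [← sum_fiberwise_of_maps_to (g := fun d => d 0) (t := range (t + 1))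
      fun d hd => mem_range.2 (Nat.lt_succ_of_le ((mem_boxedPartitions.1 hd).1 0)),
      qBinom_add_left_vandermonde hq, sum_div]
    refine sum_congr rfl fun s hs => ?_
    have hst : s ≤ t := Nat.le_of_lt_succ (mem_range.1 hs)
    rcases le_or_gt s B with hsB | hBs
    · rw [sum_boxedPartitions_filter_head hst hsB]
      simp only [boxedGordonWeight_cons, ← mul_sum]
      rw [ih s (B - s) (by omega), Nat.add_sub_cancel' hsB, qBinom_of_le hst]
      have := qPochhammer_ne_zero hq t
      have := qPochhammer_ne_zero hq s
      have := qPochhammer_ne_zero hq (t - s)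
      field_simp
      ring
    · rw [qBinom_of_lt hBs, mul_zero, zero_div, sum_eq_zero]
      intro d hd
      obtain ⟨hdB, hd0⟩ := mem_filter.1 hd
      have := single_le_sum (fun i _ => Nat.zero_le (d i)) (mem_univ 0)
      have := (mem_boxedPartitions.1 hdB).2.2
      omega

lemma sum_gordonWeight_boxedPartitions (hq : ¬IsOfFinOrder q) {L B : ℕ} (hB : B ≤ L + 1) :
    ∑ d ∈ boxedPartitions (L + 1) B B, gordonWeight q d = (qPochhammer q B)⁻¹ := by
  rw [← sum_fiberwise_of_maps_to (g := fun d => d 0) (t := range (B + 1))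
    fun d hd => mem_range.2 (Nat.lt_succ_of_le ((mem_boxedPartitions.1 hd).1 0))]
  have durfee := sum_qBinom_durfee hq B 0
  simp only [add_zero] at durfee
  rw [← durfee]
  refine sum_congr rfl fun s hs => ?_
  have hsB : s ≤ B := Nat.le_of_lt_succ (mem_range.1 hs)
  simp only [sum_boxedPartitions_filter_head hsB hsB, gordonWeight_cons, ← mul_sum]
  rw [sum_boxedGordonWeight hq L s (B - s) (by omega), Nat.add_sub_cancel' hsB, sq, mul_div_assoc]

end GordonWeight

lemma constantCoeff_qPoch (n : ℕ) : constantCoeff (qPoch n) = 1 := by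
  simp [qPoch, map_prod]

lemma algebraMap_qPoch (n : ℕ) :
    algebraMap ℚ⟦X⟧ (LaurentSeries ℚ) (qPoch n) =
      qPochhammer (algebraMap ℚ⟦X⟧ (LaurentSeries ℚ) X) n := by
  simp [qPoch, qPochhammer, map_prod]

lemma algebraMap_qPoch_inv (n : ℕ) :
    algebraMap ℚ⟦X⟧ (LaurentSeries ℚ) (qPoch n)⁻¹ =
      (qPochhammer (algebraMap ℚ⟦X⟧ (LaurentSeries ℚ) X) n)⁻¹ := by
  refine eq_inv_of_mul_eq_one_left ?_
  rw [← algebraMap_qPoch, ← map_mul, PowerSeries.inv_mul_cancel _ (by simp [constantCoeff_qPoch]),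
    map_one]

lemma not_isOfFinOrder_algebraMap_X :
    ¬IsOfFinOrder (algebraMap ℚ⟦X⟧ (LaurentSeries ℚ) X) := by
  rw [isOfFinOrder_iff_pow_eq_one]
  rintro ⟨n, hn, h⟩
  rw [← map_pow, ← map_one (algebraMap ℚ⟦X⟧ (LaurentSeries ℚ))] at h
  simpa [hn.ne'] using congrArg constantCoeff (IsFractionRing.injective _ _ h)

lemma algebraMap_Xm (r m : ℕ) :
    algebraMap ℚ⟦X⟧ (LaurentSeries ℚ) (Xm r m) =
      ∑ d ∈ (Finset.Nat.antidiagonalTuple (r - 1) m).filter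
        (fun d => ∀ a b : Fin (r - 1), a ≤ b → d b ≤ d a),
        gordonWeight (algebraMap ℚ⟦X⟧ (LaurentSeries ℚ) X) d := by
  simp only [Xm, map_sum, map_mul, map_pow, map_prod, algebraMap_qPoch_inv]
  -- `dext r d` unfolds to `zeroExtend d`
  rfl

/-- `Σ_{m=0}^{r−1} X_m = 1/(q)_{r−1}`. -/
theorem sum_X_lt (r : ℕ) (hr : 2 ≤ r) :
    ∑ m ∈ Finset.range r, Xm r m = (qPoch (r - 1))⁻¹ := by
  obtain ⟨L, rfl⟩ : ∃ L, r = L + 2 := ⟨r - 2, by omega⟩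
  apply IsFractionRing.injective ℚ⟦X⟧ (LaurentSeries ℚ)
  rw [map_sum, algebraMap_qPoch_inv]
  simp only [algebraMap_Xm]
  exact (sum_range_sum_filter_antidiagonalTuple (L + 1) (L + 1) _).trans
    (sum_gordonWeight_boxedPartitions not_isOfFinOrder_algebraMap_X le_rfl)
end

section
/- For every integer r ≥ 2, the generating series S_3 of the 3-colored partitions of type 3 satisfies S_3 = 1 − 2H + H² (q)_{r−1}/(q)_1. -/
/-!
Encode a partition by the multiset of its parts. If `k` is the smallest black part, the type-3
condition on the red partition says exactly that fewer than `k` red parts are `≤ m := r - 1 - k`.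
So for fixed `k` the two colours are independent: the black partitions have series
`q^k H (q)_{k-1}`, and the red ones are the non-empty partitions with at most `k - 1` parts in
`[1, m]`, i.e. `H (q)_m` times a Gaussian binomial (partitions in a `(k-1) × m` box), minus `1`.
The Gaussian binomial cancels against `(q)_{k-1} (q)_m = (q)_{r-2}` for `k ≤ r - 1`, and the
terms `q^k (q)_{k-1} = (q)_{k-1} - (q)_k` telescope: the sum over `k ≤ N` differs from the
claimed series by `(H - 1)(1 - H (q)_N)`, which vanishes in degrees `≤ N`.
-/

open PowerSeries Finset

/-- `H`, the generating series of the partition function. -/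
noncomputable def Hq : PowerSeries ℚ :=
  PowerSeries.mk fun n => (Set.ncard {l : List ℕ | IsPtn l ∧ l.sum = n} : ℚ)

/-- generating series counting 3-colored partitions (triples of partitions) satisfying `P`,
by total size. -/
noncomputable def cseries (P : List ℕ → List ℕ → List ℕ → Prop) : PowerSeries ℚ :=
  PowerSeries.mk fun n =>
    (Set.ncard {t : List ℕ × List ℕ × List ℕ |
        P t.1 t.2.1 t.2.2 ∧ t.1.sum + t.2.1.sum + t.2.2.sum = n} : ℚ)

/-- type 3.a: black and red parts non-empty, no green parts, `1 ≤ ℓ_r ≤ k−1`. -/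
def Type3a (b rd g : List ℕ) : Prop :=
  IsPtn b ∧ IsPtn rd ∧ IsPtn g ∧ b ≠ [] ∧ rd ≠ [] ∧ g = [] ∧
    1 ≤ rd.length ∧ rd.length ≤ Kpart b - 1

/-- type 3.b: black and red parts non-empty, no green parts, `ℓ_r ≥ k` and `k + i_k ≥ r`. -/
def Type3b (r : ℕ) (b rd g : List ℕ) : Prop :=
  IsPtn b ∧ IsPtn rd ∧ IsPtn g ∧ b ≠ [] ∧ rd ≠ [] ∧ g = [] ∧
    Kpart b ≤ rd.length ∧ r ≤ Kpart b + Ikpart rd (Kpart b)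

def partitionsWith (Q : Multiset ℕ → Prop) (n : ℕ) : Set (Multiset ℕ) :=
  {M | (∀ x ∈ M, 0 < x) ∧ Q M ∧ M.sum = n}

noncomputable def partGF (Q : Multiset ℕ → Prop) : PowerSeries ℚ :=
  PowerSeries.mk fun n => ((partitionsWith Q n).ncard : ℚ)

lemma coeff_partGF (Q : Multiset ℕ → Prop) (n : ℕ) :
    coeff n (partGF Q) = (partitionsWith Q n).ncard :=
  coeff_mk _ _

lemma partitionsWith_finite (Q : Multiset ℕ → Prop) (n : ℕ) : (partitionsWith Q n).Finite :=
  (Set.finite_range fun p : n.Partition => p.parts).subset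
    fun M ⟨hpos, _, hsum⟩ => ⟨⟨M, hpos _, hsum⟩, rfl⟩

lemma partitionsWith_congr {Q Q' : Multiset ℕ → Prop} {n : ℕ}
    (h : ∀ M, (∀ x ∈ M, 0 < x) → M.sum = n → (Q M ↔ Q' M)) :
    partitionsWith Q n = partitionsWith Q' n := by
  ext M
  constructor <;> rintro ⟨hpos, hQ, hsum⟩
  exacts [⟨hpos, (h M hpos hsum).1 hQ, hsum⟩, ⟨hpos, (h M hpos hsum).2 hQ, hsum⟩]

lemma partGF_congr {Q Q' : Multiset ℕ → Prop}
    (h : ∀ M, (∀ x ∈ M, 0 < x) → (Q M ↔ Q' M)) : partGF Q = partGF Q' := by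
  ext n
  rw [coeff_partGF, coeff_partGF, partitionsWith_congr fun M hM _ => h M hM]

lemma partGF_eq_zero : partGF (· = 0) = 1 := by
  ext n
  rw [coeff_partGF, coeff_one]
  have : partitionsWith (· = 0) n = if n = 0 then {0} else ∅ := by
    ext M
    by_cases hn : n = 0 <;> aesop (add simp partitionsWith)
  split_ifs at this ⊢ <;> simp [this]

lemma partGF_eq_add (Q R : Multiset ℕ → Prop) :
    partGF Q = partGF (fun M => Q M ∧ R M) + partGF (fun M => Q M ∧ ¬ R M) := by
  ext n
  have hdisj : Disjoint (partitionsWith (fun M => Q M ∧ R M) n)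
      (partitionsWith (fun M => Q M ∧ ¬ R M) n) :=
    Set.disjoint_left.2 fun M h₁ h₂ => h₂.2.1.2 h₁.2.1.2
  rw [map_add, coeff_partGF, coeff_partGF, coeff_partGF, ← Nat.cast_add,
    ← Set.ncard_union_eq hdisj (partitionsWith_finite _ n) (partitionsWith_finite _ n)]
  congr 2
  ext M
  simp only [partitionsWith, Set.mem_union, Set.mem_ofPred_eq]
  tauto

lemma partGF_ne_zero_and {Q : Multiset ℕ → Prop} (hQ : Q 0) :
    partGF (fun M => M ≠ 0 ∧ Q M) = partGF Q - 1 := by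
  rw [partGF_eq_add Q (· = 0), ← partGF_eq_zero,
    partGF_congr (Q := fun M => Q M ∧ M = 0) (Q' := (· = 0)) fun M _ => by aesop,
    partGF_congr (Q := fun M => Q M ∧ M ≠ 0) (Q' := fun M => M ≠ 0 ∧ Q M)
      fun M _ => and_comm]
  ring

lemma partGF_mem {c : ℕ} (hc : 0 < c) {Q Q' : Multiset ℕ → Prop}
    (h : ∀ M, c ∈ M → (Q M ↔ Q' (M.erase c))) :
    partGF (fun M => c ∈ M ∧ Q M) = X ^ c * partGF Q' := by
  ext n
  rw [coeff_X_pow_mul', coeff_partGF]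
  split_ifs with hcn
  · have hbij : Set.BijOn (c ::ₘ ·) (partitionsWith Q' (n - c))
        (partitionsWith (fun M => c ∈ M ∧ Q M) n) := by
      refine Set.InvOn.bijOn (f' := (·.erase c))
        ⟨fun M _ => Multiset.erase_cons_head c M, fun M hM => Multiset.cons_erase hM.2.1.1⟩
        ?_ ?_
      · rintro M ⟨hpos, hQ', hsum⟩
        refine ⟨?_, ⟨Multiset.mem_cons_self c M, ?_⟩, ?_⟩
        · simpa [hc] using hpos
        · rwa [h _ (Multiset.mem_cons_self c M), Multiset.erase_cons_head]
        · rw [Multiset.sum_cons, hsum]; omega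
      · rintro M ⟨hpos, ⟨hcM, hQ⟩, hsum⟩
        refine ⟨fun x hx => hpos x (Multiset.mem_of_mem_erase hx), (h M hcM).1 hQ, ?_⟩
        have := congrArg Multiset.sum (Multiset.cons_erase hcM)
        rw [Multiset.sum_cons] at this
        show (M.erase c).sum = n - c
        omega
    rw [coeff_partGF, hbij.ncard_eq]
  · rw [Set.eq_empty_of_forall_notMem fun M (hM : M ∈ partitionsWith _ n) =>
      hcn (hM.2.2 ▸ Multiset.le_sum_of_mem hM.2.1.1), Set.ncard_empty, Nat.cast_zero]

lemma partGF_eq_add_X_pow_mul {c : ℕ} (hc : 0 < c) {Q Q' : Multiset ℕ → Prop}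
    (h : ∀ M, c ∈ M → (Q M ↔ Q' (M.erase c))) :
    partGF Q = partGF (fun M => Q M ∧ c ∉ M) + X ^ c * partGF Q' := by
  rw [partGF_eq_add Q (c ∉ ·), ← partGF_mem hc h]
  congr 1
  exact partGF_congr fun M _ => by rw [not_not, and_comm]

def pairsWith (P Q : Multiset ℕ → Prop) (n : ℕ) : Set (Multiset ℕ × Multiset ℕ) :=
  {z | (∀ x ∈ z.1, 0 < x) ∧ (∀ x ∈ z.2, 0 < x) ∧ P z.1 ∧ Q z.2 ∧
    z.1.sum + z.2.sum = n}

lemma pairsWith_eq_biUnion (P Q : Multiset ℕ → Prop) (n : ℕ) :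
    pairsWith P Q n =
      ⋃ ab ∈ antidiagonal n, partitionsWith P ab.1 ×ˢ partitionsWith Q ab.2 := by
  ext ⟨A, B⟩
  simp only [pairsWith, partitionsWith, Set.mem_ofPred_eq, Set.mem_iUnion, Set.mem_prod,
    HasAntidiagonal.mem_antidiagonal, exists_prop, Prod.exists]
  constructor
  · rintro ⟨hA, hB, hP, hQ, hsum⟩
    exact ⟨A.sum, B.sum, hsum, ⟨hA, hP, rfl⟩, hB, hQ, rfl⟩
  · rintro ⟨a, b, hab, ⟨hA, hP, rfl⟩, hB, hQ, rfl⟩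
    exact ⟨hA, hB, hP, hQ, hab⟩

lemma pairsWith_finite (P Q : Multiset ℕ → Prop) (n : ℕ) : (pairsWith P Q n).Finite := by
  rw [pairsWith_eq_biUnion]
  exact (finite_toSet _).biUnion
    fun _ _ => (partitionsWith_finite P _).prod (partitionsWith_finite Q _)

lemma coeff_partGF_mul (P Q : Multiset ℕ → Prop) (n : ℕ) :
    coeff n (partGF P * partGF Q) = (pairsWith P Q n).ncard := by
  have hdisj : (antidiagonal n : Set (ℕ × ℕ)).PairwiseDisjoint
      fun ab => partitionsWith P ab.1 ×ˢ partitionsWith Q ab.2 := by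
    rintro ⟨a, b⟩ - ⟨c, d⟩ - hne
    refine Set.disjoint_left.2 fun z h₁ h₂ => hne ?_
    rw [Prod.mk.injEq]
    exact ⟨h₁.1.2.2.symm.trans h₂.1.2.2, h₁.2.2.2.symm.trans h₂.2.2.2⟩
  rw [coeff_mul, pairsWith_eq_biUnion, ← set_biUnion_coe, (finite_toSet _).ncard_biUnion
    (fun _ _ => (partitionsWith_finite P _).prod (partitionsWith_finite Q _)) hdisj,
    finsum_mem_coe_finset]
  simp only [coeff_partGF, Set.ncard_prod]
  push_cast
  rfl

lemma partGF_filter_and_filter_not (p : ℕ → Prop) [DecidablePred p]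
    (P Q : Multiset ℕ → Prop) :
    partGF (fun M => P (M.filter p) ∧ Q (M.filter (¬ p ·))) =
      partGF (fun M => (∀ x ∈ M, p x) ∧ P M) *
        partGF (fun M => (∀ x ∈ M, ¬ p x) ∧ Q M) := by
  ext n
  have hfilter : ∀ A B : Multiset ℕ, (∀ x ∈ A, p x) → (∀ x ∈ B, ¬ p x) →
      (A + B).filter p = A ∧ (A + B).filter (¬ p ·) = B := fun A B hA hB => by
    simp only [Multiset.filter_add, Multiset.filter_eq_self.2 hA, Multiset.filter_eq_nil.2 hB,
      Multiset.filter_eq_nil.2 fun x hx => not_not.2 (hA x hx), Multiset.filter_eq_self.2 hB,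
      add_zero, zero_add, and_self]
  have hbij : Set.BijOn (fun z : Multiset ℕ × Multiset ℕ => z.1 + z.2)
      (pairsWith (fun M => (∀ x ∈ M, p x) ∧ P M) (fun M => (∀ x ∈ M, ¬ p x) ∧ Q M) n)
      (partitionsWith (fun M => P (M.filter p) ∧ Q (M.filter (¬ p ·))) n) := by
    refine Set.InvOn.bijOn (f' := fun M => (M.filter p, M.filter (¬ p ·)))
      ⟨?_, fun M _ => Multiset.filter_add_not p M⟩ ?_ ?_
    · rintro ⟨A, B⟩ ⟨-, -, ⟨hA, -⟩, ⟨hB, -⟩, -⟩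
      obtain ⟨h₁, h₂⟩ := hfilter A B hA hB
      exact Prod.ext h₁ h₂
    · rintro ⟨A, B⟩ ⟨hposA, hposB, ⟨hA, hP⟩, ⟨hB, hQ⟩, hsum⟩
      obtain ⟨h₁, h₂⟩ := hfilter A B hA hB
      refine ⟨fun x hx => (Multiset.mem_add.1 hx).elim (hposA x) (hposB x),
        ⟨by rwa [h₁], by rwa [h₂]⟩, by rwa [Multiset.sum_add]⟩
    · rintro M ⟨hpos, ⟨hP, hQ⟩, hsum⟩
      refine ⟨fun x hx => hpos x (Multiset.mem_of_mem_filter hx),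
        fun x hx => hpos x (Multiset.mem_of_mem_filter hx),
        ⟨fun x hx => (Multiset.mem_filter.1 hx).2, hP⟩,
        ⟨fun x hx => (Multiset.mem_filter.1 hx).2, hQ⟩, ?_⟩
      rw [← Multiset.sum_add, Multiset.filter_add_not, hsum]
  rw [coeff_partGF_mul, coeff_partGF, hbij.ncard_eq]

lemma injOn_coe_isPtn : Set.InjOn ((↑) : List ℕ → Multiset ℕ) {l | IsPtn l} :=
  fun _ h₁ _ h₂ h => List.Perm.eq_of_pairwise' h₁.1 h₂.1 (Multiset.coe_eq_coe.1 h)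

lemma exists_isPtn_coe_eq {M : Multiset ℕ} (hM : ∀ x ∈ M, 0 < x) :
    ∃ l, IsPtn l ∧ (l : Multiset ℕ) = M :=
  ⟨M.sort (· ≥ ·),
    ⟨Multiset.pairwise_sort _ _, fun x hx => hM x ((Multiset.mem_sort _).1 hx)⟩,
    Multiset.sort_eq _ _⟩

lemma injOn_coe_coe_of_nil :
    Set.InjOn
      (fun t : List ℕ × List ℕ × List ℕ => ((t.1 : Multiset ℕ), (t.2.1 : Multiset ℕ)))
      {t | IsPtn t.1 ∧ IsPtn t.2.1 ∧ t.2.2 = []} := by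
  rintro ⟨b, rd, g⟩ ⟨hb, hrd, rfl⟩ ⟨b', rd', g'⟩ ⟨hb', hrd', rfl⟩ h
  simp only [Prod.mk.injEq] at h
  exact Prod.ext (injOn_coe_isPtn hb hb' h.1) (Prod.ext (injOn_coe_isPtn hrd hrd' h.2) rfl)

lemma Hq_eq_partGF : Hq = partGF fun _ => True := by
  ext n
  rw [Hq, coeff_mk, coeff_partGF,
    ← (injOn_coe_isPtn.mono fun _ h => h.1).ncard_image]
  congr 2
  ext M
  constructor
  · rintro ⟨l, ⟨hl, hsum⟩, rfl⟩
    exact ⟨hl.2, trivial, by rwa [Multiset.sum_coe]⟩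
  · rintro ⟨hpos, -, hsum⟩
    obtain ⟨l, hl, rfl⟩ := exists_isPtn_coe_eq hpos
    exact ⟨l, ⟨hl, by rwa [Multiset.sum_coe] at hsum⟩, rfl⟩

lemma qPoch_zero : qPoch 0 = 1 := prod_range_zero _

lemma qPoch_succ (n : ℕ) : qPoch (n + 1) = qPoch n * (1 - X ^ (n + 1)) := prod_range_succ _ _

lemma forall_mem_erase_iff {p : ℕ → Prop} {c : ℕ} {M : Multiset ℕ} (hc : c ∈ M)
    (hpc : p c) : (∀ x ∈ M.erase c, p x) ↔ ∀ x ∈ M, p x := by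
  conv_rhs => rw [← Multiset.cons_erase hc]
  simp [hpc]

lemma partGF_forall_lt (t : ℕ) : partGF (fun M => ∀ x ∈ M, t < x) = Hq * qPoch t := by
  induction t with
  | zero =>
    rw [Hq_eq_partGF, qPoch_zero, mul_one]
    exact partGF_congr fun M hM => iff_true_intro hM
  | succ t ih =>
    have hrec := partGF_eq_add_X_pow_mul (c := t + 1) t.succ_pos (Q := fun M => ∀ x ∈ M, t < x)
      (Q' := fun M => ∀ x ∈ M, t < x) fun M hM => (forall_mem_erase_iff hM t.lt_succ_self).symm
    have hsucc : partGF (fun M => (∀ x ∈ M, t < x) ∧ t + 1 ∉ M)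
        = partGF (fun M => ∀ x ∈ M, t + 1 < x) := partGF_congr fun M _ =>
      ⟨fun ⟨h, hM⟩ x hx => lt_of_le_of_ne (h x hx) (ne_of_mem_of_not_mem hx hM).symm,
        fun h => ⟨fun x hx => (h x hx).trans' t.lt_succ_self, fun hM => (h _ hM).false⟩⟩
    rw [hsucc, ih] at hrec
    rw [qPoch_succ]
    linear_combination -hrec

noncomputable def boxGF (a b : ℕ) : PowerSeries ℚ :=
  partGF fun M => Multiset.card M ≤ a ∧ ∀ x ∈ M, x ≤ b

lemma boxGF_zero_left (b : ℕ) : boxGF 0 b = 1 := by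
  rw [boxGF, ← partGF_eq_zero]
  exact partGF_congr fun M _ =>
    ⟨fun h => Multiset.card_eq_zero.1 (Nat.le_zero.1 h.1), by rintro rfl; simp⟩

lemma boxGF_zero_right (a : ℕ) : boxGF a 0 = 1 := by
  rw [boxGF, ← partGF_eq_zero]
  refine partGF_congr fun M hM => ⟨fun h => ?_, by rintro rfl; simp⟩
  exact Multiset.eq_zero_of_forall_notMem fun x hx => (hM x hx).not_ge (h.2 x hx)

lemma boxGF_succ_succ (a b : ℕ) :
    boxGF (a + 1) (b + 1) = boxGF (a + 1) b + X ^ (b + 1) * boxGF a (b + 1) := by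
  rw [boxGF, partGF_eq_add_X_pow_mul (c := b + 1) b.succ_pos
    (Q' := fun M => Multiset.card M ≤ a ∧ ∀ x ∈ M, x ≤ b + 1) fun M hM => by
      have hcard := Multiset.card_pos_iff_exists_mem.2 ⟨_, hM⟩
      rw [Multiset.card_erase_of_mem hM, Nat.pred_eq_sub_one,
        forall_mem_erase_iff (p := (· ≤ b + 1)) hM le_rfl]
      exact and_congr_left' (by omega)]
  · congr 1
    refine partGF_congr fun M _ => ⟨fun ⟨⟨hcard, h⟩, hM⟩ => ⟨hcard, fun x hx => ?_⟩,
      fun ⟨hcard, h⟩ => ⟨⟨hcard, fun x hx => (h x hx).trans b.le_succ⟩, fun hM => ?_⟩⟩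
    · exact Nat.le_of_lt_succ ((h x hx).lt_of_ne (ne_of_mem_of_not_mem hx hM))
    · exact (h _ hM).not_gt b.lt_succ_self

lemma boxGF_mul_qPoch_mul_qPoch (a b : ℕ) : boxGF a b * (qPoch a * qPoch b) = qPoch (a + b) := by
  induction a generalizing b with
  | zero => rw [boxGF_zero_left, qPoch_zero, one_mul, one_mul, zero_add]
  | succ a iha =>
    induction b with
    | zero => rw [boxGF_zero_right, qPoch_zero, one_mul, mul_one, add_zero]
    | succ b ihb =>
      have h := iha (b + 1)
      rw [show a + (b + 1) = a + 1 + b by omega] at h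
      rw [qPoch_succ a] at ihb
      rw [boxGF_succ_succ, show a + 1 + (b + 1) = a + 1 + b + 1 by omega, qPoch_succ (a + 1 + b),
        qPoch_succ a, qPoch_succ b]
      rw [qPoch_succ b] at h
      linear_combination (1 - X ^ (b + 1)) * ihb + X ^ (b + 1) * (1 - X ^ (a + 1)) * h

lemma partGF_countP_le (a m : ℕ) :
    partGF (fun M => M.countP (· ≤ m) ≤ a) = boxGF a m * (Hq * qPoch m) := by
  calc partGF (fun M => M.countP (· ≤ m) ≤ a)
      = partGF (fun M => Multiset.card (M.filter (· ≤ m)) ≤ a ∧ True) :=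
        partGF_congr fun M _ => by rw [Multiset.countP_eq_card_filter, and_true]
    _ = boxGF a m * partGF (fun M => ∀ x ∈ M, m < x) := by
        refine (partGF_filter_and_filter_not (· ≤ m) (fun M => Multiset.card M ≤ a)
          fun _ => True).trans ?_
        congr 1 <;> exact partGF_congr fun M _ => by simp [and_comm]
    _ = boxGF a m * (Hq * qPoch m) := by rw [partGF_forall_lt]

lemma countP_append_cons_lt_iff {A B : List ℕ} {x m : ℕ} (hA : ∀ a ∈ A, x ≤ a)
    (hB : ∀ b ∈ B, b ≤ x) : (A ++ x :: B).countP (· ≤ m) < B.length + 1 ↔ m < x := by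
  rw [List.countP_append, List.countP_cons]
  by_cases hx : x ≤ m
  · have hB' : B.countP (· ≤ m) = B.length :=
      List.countP_eq_length.2 fun b hb => decide_eq_true ((hB b hb).trans hx)
    simp only [hx, decide_true, if_true, hB', not_lt.2 hx, iff_false]
    omega
  · have hA' : A.countP (· ≤ m) = 0 :=
      List.countP_eq_zero.2 fun a ha => by simpa using (lt_of_not_ge hx).trans_le (hA a ha)
    have := List.countP_le_length (p := (· ≤ m)) (l := B)
    simp only [hx, decide_false, Bool.false_eq_true, if_false, hA', lt_of_not_ge hx, iff_true]
    omega

lemma pairwise_ge_split {l : List ℕ} (hl : l.Pairwise (· ≥ ·)) {i : ℕ} (hi : i < l.length) :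
    l = l.take i ++ l[i] :: l.drop (i + 1) ∧
      (∀ a ∈ l.take i, l[i] ≤ a) ∧ ∀ b ∈ l.drop (i + 1), b ≤ l[i] := by
  have hsplit : l = l.take i ++ l[i] :: l.drop (i + 1) := by
    rw [List.getElem_cons_drop, List.take_append_drop]
  have h := hsplit ▸ hl
  rw [List.pairwise_append, List.pairwise_cons] at h
  exact ⟨hsplit, fun a ha => h.2.2 a ha _ List.mem_cons_self, h.2.1.1⟩

lemma length_le_or_le_add_Ikpart_iff {rd : List ℕ} (hrd : IsPtn rd) {k : ℕ} (hk : 0 < k)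
    (r : ℕ) :
    rd.length ≤ k - 1 ∨ (k ≤ rd.length ∧ r ≤ k + Ikpart rd k) ↔
      rd.countP (· ≤ r - 1 - k) ≤ k - 1 := by
  rcases lt_or_ge rd.length k with hlen | hlen
  · exact iff_of_true (Or.inl (by omega)) (List.countP_le_length.trans (by omega))
  have hi : rd.length - k < rd.length := by omega
  obtain ⟨hsplit, hA, hB⟩ := pairwise_ge_split hrd.1 hi
  have hBlen : (rd.drop (rd.length - k + 1)).length + 1 = k := by rw [List.length_drop]; omega
  have hIk : Ikpart rd k = rd[rd.length - k] := List.getD_eq_getElem _ _ hi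
  -- `r - 1 - k` truncates to `0` when `r ≤ k`; positivity of the parts covers that case
  have hpos := hrd.2 _ (List.getElem_mem hi)
  have hcount := countP_append_cons_lt_iff (m := r - 1 - k) hA hB
  rw [← hsplit, hBlen] at hcount
  rw [hIk]
  omega

def IsSmallestPart (k : ℕ) (M : Multiset ℕ) : Prop := k ∈ M ∧ ∀ x ∈ M, k ≤ x

lemma isSmallestPart_coe_iff {b : List ℕ} (hb : b.Pairwise (· ≥ ·)) (hne : b ≠ [])
    {k : ℕ} : IsSmallestPart k b ↔ k = Kpart b := by
  have hi : b.length - 1 < b.length := Nat.sub_one_lt (List.length_pos_iff.2 hne).ne'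
  have hK : Kpart b = b[b.length - 1] := List.getD_eq_getElem _ _ hi
  have hmin : ∀ x ∈ b, Kpart b ≤ x := fun x hx => by
    obtain ⟨j, hj, rfl⟩ := List.getElem_of_mem hx
    rcases (Nat.le_sub_one_of_lt hj).lt_or_eq with h | h
    · exact hK ▸ List.pairwise_iff_getElem.1 hb j _ hj hi h
    · simp [hK, h]
  simp only [IsSmallestPart, Multiset.mem_coe]
  refine ⟨fun ⟨hk, hkmin⟩ => le_antisymm (hkmin _ ?_) (hmin k hk), ?_⟩
  · exact hK ▸ List.getElem_mem hi
  · rintro rfl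
    exact ⟨hK ▸ List.getElem_mem hi, hmin⟩

def Type3Red (r k : ℕ) (R : Multiset ℕ) : Prop :=
  R ≠ 0 ∧ R.countP (· ≤ r - 1 - k) ≤ k - 1

lemma type3_iff (r : ℕ) (b rd g : List ℕ) :
    Type3a b rd g ∨ Type3b r b rd g ↔
      IsPtn b ∧ IsPtn rd ∧ g = [] ∧ b ≠ [] ∧ Type3Red r (Kpart b) rd := by
  by_cases h : IsPtn b ∧ IsPtn rd ∧ g = [] ∧ b ≠ [] ∧ rd ≠ []
  · obtain ⟨hb, hrd, rfl, hbne, hrdne⟩ := h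
    have hnil : IsPtn [] := ⟨List.Pairwise.nil, by simp⟩
    have hlen : 1 ≤ rd.length := List.length_pos_iff.2 hrdne
    have hk : 0 < Kpart b := by
      obtain ⟨hmem, -⟩ := (isSmallestPart_coe_iff hb.1 hbne).2 rfl
      exact hb.2 _ hmem
    simp only [Type3a, Type3b, Type3Red, hb, hrd, hnil, hbne, hrdne, hlen, Multiset.coe_countP,
      ← length_le_or_le_add_Ikpart_iff hrd hk r, Ne, Multiset.coe_eq_zero, not_false_eq_true,
      true_and]
  · simp only [Type3a, Type3b, Type3Red, Ne, Multiset.coe_eq_zero] at h ⊢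
    tauto

lemma image_type3_eq_biUnion (r : ℕ) {n N : ℕ} (hN : n ≤ N) :
    (fun t : List ℕ × List ℕ × List ℕ => ((t.1 : Multiset ℕ), (t.2.1 : Multiset ℕ))) ''
        {t | (Type3a t.1 t.2.1 t.2.2 ∨ Type3b r t.1 t.2.1 t.2.2) ∧
          t.1.sum + t.2.1.sum + t.2.2.sum = n} =
      ⋃ j ∈ range N, pairsWith (IsSmallestPart (j + 1)) (Type3Red r (j + 1)) n := by
  ext ⟨B, R⟩
  simp only [Set.mem_image, Set.mem_iUnion, mem_range, exists_prop, type3_iff, Prod.exists,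
    Prod.mk.injEq]
  constructor
  · rintro ⟨b, rd, g, ⟨⟨hb, hrd, rfl, hbne, hred⟩, hsum⟩, rfl, rfl⟩
    have hK := (isSmallestPart_coe_iff hb.1 hbne).2 rfl
    have hKpos : 0 < Kpart b := hb.2 _ hK.1
    have hKle : Kpart b ≤ b.sum := List.le_sum_of_mem hK.1
    simp only [List.sum_nil, add_zero] at hsum
    refine ⟨Kpart b - 1, by omega, hb.2, hrd.2, ?_, ?_, by simpa using hsum⟩ <;>
      rwa [Nat.sub_add_cancel hKpos]
  · rintro ⟨j, -, hposB, hposR, hB, hR, hsum⟩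
    obtain ⟨b, hb, rfl⟩ := exists_isPtn_coe_eq hposB
    obtain ⟨rd, hrd, rfl⟩ := exists_isPtn_coe_eq hposR
    have hbne : b ≠ [] := by rintro rfl; exact Multiset.notMem_zero _ hB.1
    have hK := (isSmallestPart_coe_iff hb.1 hbne).1 hB
    exact ⟨b, rd, [], ⟨⟨hb, hrd, rfl, hbne, hK ▸ hR⟩, by simpa using hsum⟩, rfl, rfl⟩

lemma coeff_cseries_type3 (r : ℕ) {n N : ℕ} (hN : n ≤ N) :
    coeff n (cseries fun b rd g => Type3a b rd g ∨ Type3b r b rd g) =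
      coeff n (∑ j ∈ range N,
        partGF (IsSmallestPart (j + 1)) * partGF (Type3Red r (j + 1))) := by
  have hdisj : (range N : Set ℕ).PairwiseDisjoint
      fun j => pairsWith (IsSmallestPart (j + 1)) (Type3Red r (j + 1)) n := by
    intro i _ j _ hij
    refine Set.disjoint_left.2 fun z hi hj => hij ?_
    have := le_antisymm (hi.2.2.1.2 _ hj.2.2.1.1) (hj.2.2.1.2 _ hi.2.2.1.1)
    omega
  rw [cseries, coeff_mk, ← (injOn_coe_coe_of_nil.mono ?_).ncard_image,
    image_type3_eq_biUnion r hN, ← set_biUnion_coe,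
    (finite_toSet _).ncard_biUnion (fun _ _ => pairsWith_finite _ _ _) hdisj,
    finsum_mem_coe_finset, map_sum, Nat.cast_sum]
  · simp only [coeff_partGF_mul]
  · rintro ⟨b, rd, g⟩ ⟨ht, -⟩
    obtain ⟨hb, hrd, hg, -⟩ := (type3_iff r b rd g).1 ht
    exact ⟨hb, hrd, hg⟩

lemma partGF_isSmallestPart (j : ℕ) :
    partGF (IsSmallestPart (j + 1)) = X ^ (j + 1) * (Hq * qPoch j) := by
  rw [← partGF_forall_lt]
  exact partGF_mem j.succ_pos fun M hM => (forall_mem_erase_iff hM j.lt_succ_self).symm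

lemma partGF_type3Red (r k : ℕ) :
    partGF (Type3Red r k) = boxGF (k - 1) (r - 1 - k) * (Hq * qPoch (r - 1 - k)) - 1 := by
  rw [← partGF_countP_le]
  exact partGF_ne_zero_and (by simp)

lemma coeff_mul_one_sub_Hq_mul_qPoch (f : PowerSeries ℚ) {n N : ℕ} (hn : n ≤ N) :
    coeff n (f * (1 - Hq * qPoch N)) = 0 := by
  have hlow : ∀ j ≤ N, coeff j (Hq * qPoch N) = coeff j 1 := fun j hj => by
    rw [← partGF_forall_lt, ← partGF_eq_zero, coeff_partGF, coeff_partGF,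
      partitionsWith_congr fun M _ hsum => ⟨fun h => Multiset.eq_zero_of_forall_notMem fun x hx =>
        (h x hx).not_ge ((Multiset.le_sum_of_mem hx).trans (hsum ▸ hj)), by rintro rfl; simp⟩]
  rw [coeff_mul]
  refine sum_eq_zero fun ab hab => ?_
  have := HasAntidiagonal.mem_antidiagonal.1 hab
  rw [map_sub, hlow ab.2 (by omega), sub_self, mul_zero]

lemma qPoch_mul_inv_qPoch_one (s : ℕ) :
    qPoch (s + 1) * (qPoch 1)⁻¹ = qPoch s * ∑ j ∈ range (s + 1), X ^ j := by
  have hq1 : qPoch 1 = 1 - X := by rw [qPoch_succ, qPoch_zero, one_mul, zero_add, pow_one]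
  rw [eq_comm, PowerSeries.eq_mul_inv_iff_mul_eq (by simp [hq1]), qPoch_succ s, hq1]
  linear_combination -qPoch s * geom_sum_mul (X : PowerSeries ℚ) (s + 1)

lemma sum_range_type3 (s L : ℕ) :
    ∑ j ∈ range (s + 1 + L),
        partGF (IsSmallestPart (j + 1)) * partGF (Type3Red (s + 2) (j + 1)) =
      1 - 2 * Hq + Hq ^ 2 * qPoch (s + 1) * (qPoch 1)⁻¹
        + (Hq - 1) * (1 - Hq * qPoch (s + 1 + L)) := by
  have hlow : ∀ j ∈ range (s + 1),
      partGF (IsSmallestPart (j + 1)) * partGF (Type3Red (s + 2) (j + 1)) =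
        Hq ^ 2 * qPoch s * X ^ (j + 1) - Hq * (qPoch j - qPoch (j + 1)) := fun j hj => by
    have hjs : j ≤ s := Nat.lt_succ_iff.1 (mem_range.1 hj)
    have hbox := boxGF_mul_qPoch_mul_qPoch j (s - j)
    rw [Nat.add_sub_cancel' hjs] at hbox
    rw [partGF_isSmallestPart, partGF_type3Red, show s + 2 - 1 - (j + 1) = s - j by omega,
      Nat.add_sub_cancel, qPoch_succ j]
    linear_combination (X ^ (j + 1) * Hq ^ 2) * hbox
  have hhigh : ∀ i ∈ range L,
      partGF (IsSmallestPart (s + 1 + i + 1)) * partGF (Type3Red (s + 2) (s + 1 + i + 1)) =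
        (Hq ^ 2 - Hq) * (qPoch (s + 1 + i) - qPoch (s + 1 + (i + 1))) := fun i _ => by
    rw [partGF_isSmallestPart, partGF_type3Red, show s + 2 - 1 - (s + 1 + i + 1) = 0 by omega,
      boxGF_zero_right, qPoch_zero, ← add_assoc, qPoch_succ (s + 1 + i)]
    ring
  have htel : ∑ i ∈ range L, (qPoch (s + 1 + i) - qPoch (s + 1 + (i + 1))) =
      qPoch (s + 1) - qPoch (s + 1 + L) := sum_range_sub' (fun i => qPoch (s + 1 + i)) L
  rw [sum_range_add, sum_congr rfl hlow, sum_congr rfl hhigh, sum_sub_distrib, ← mul_sum,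
    ← mul_sum, ← mul_sum, sum_range_sub', htel, qPoch_zero, mul_assoc (Hq ^ 2) (qPoch (s + 1)),
    qPoch_mul_inv_qPoch_one]
  simp only [pow_succ, ← sum_mul]
  linear_combination (Hq ^ 2 * qPoch s) * geom_sum_mul (X : PowerSeries ℚ) (s + 1)
    + Hq ^ 2 * qPoch_succ s

/-- `S_3 = 1 − 2H + H² (q)_{r−1}/(q)_1`. -/
theorem S3_eq (r : ℕ) (hr : 2 ≤ r) :
    cseries (fun b rd g => Type3a b rd g ∨ Type3b r b rd g)
      = 1 - 2 * Hq + Hq ^ 2 * qPoch (r - 1) * (qPoch 1)⁻¹ := by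
  obtain ⟨s, rfl⟩ : ∃ s, r = s + 2 := ⟨r - 2, by omega⟩
  ext n
  rw [show s + 2 - 1 = s + 1 by omega, coeff_cseries_type3 (s + 2) (N := s + 1 + n) (by omega),
    sum_range_type3, map_add, coeff_mul_one_sub_Hq_mul_qPoch _ (by omega), add_zero]
end

section
/- For integers r ≥ 2, ℓ ≥ 0 and n ≥ 0: G_{r,ℓ}(n) = Σ_{m=0}^{ℓ+r−1} b_{r,r}(m,n) − Σ_{i=1}^{r−1} b_{r,i}(ℓ+i, n). -/
open PowerSeries Finset

/-- `b_{r,i}(m,n)`: the number of partitions in `B_{r,i}(n)` with exactly `m` parts. -/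
noncomputable def bcount (r i m n : ℕ) : ℕ :=
  Set.ncard {l : List ℕ | IsPtn l ∧ l.sum = n ∧ GordonCond r l ∧
    l.count 1 ≤ i - 1 ∧ l.length = m}

/-- `G_{r,ℓ}(n)`: the number of partitions in `B_{r,r}(n)` with at most `ℓ` parts
different from 1. -/
noncomputable def Gcount (r ℓ n : ℕ) : ℕ :=
  Set.ncard {l : List ℕ | MemB r r l ∧ l.sum = n ∧ l.length - l.count 1 ≤ ℓ}

/-
The identity only involves, for each Gordon partition of `n`, its number of parts `m` and its
number `c` of ones. Among those with `c ≤ r - 1` and `m < ℓ + r`, the ones with `m - c ≤ ℓ` are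
exactly those counted by `G_{r,ℓ}(n)`; every other one has `i := m - ℓ ∈ [1, r - 1]` and
`c ≤ i - 1`, i.e. it is counted by `b_{r,i}(ℓ + i, n)`, and for exactly one `i`.
-/

theorem card_filter_sub_le_add_sum_card_filter {α : Type*} (s : Finset α) (f g : α → ℕ)
    (k ℓ : ℕ) :
    #{x ∈ s | g x ≤ k ∧ f x - g x ≤ ℓ} +
        ∑ i ∈ Icc 1 k, #{x ∈ s | g x ≤ i - 1 ∧ f x = ℓ + i} =
      ∑ m ∈ range (ℓ + k + 1), #{x ∈ s | g x ≤ k ∧ f x = m} := by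
  set t := {x ∈ s | g x ≤ k ∧ f x ≤ ℓ + k}
  have hsmall : {x ∈ t | f x - g x ≤ ℓ} = {x ∈ s | g x ≤ k ∧ f x - g x ≤ ℓ} := by
    rw [filter_filter]
    exact filter_congr fun x _ => by omega
  have hlarge : #{x ∈ t | ¬f x - g x ≤ ℓ} =
      ∑ i ∈ Icc 1 k, #{x ∈ s | g x ≤ i - 1 ∧ f x = ℓ + i} := by
    have hmaps : Set.MapsTo (fun x => f x - ℓ) ↑({x ∈ t | ¬f x - g x ≤ ℓ} : Finset α)
        ↑(Icc 1 k) := by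
      intro x hx
      simp only [t, mem_coe, mem_filter] at hx
      simp only [coe_Icc, Set.mem_Icc]
      omega
    rw [card_eq_sum_card_fiberwise hmaps]
    refine sum_congr rfl fun i hi => ?_
    rw [mem_Icc] at hi
    rw [filter_filter, filter_filter]
    exact congrArg card (filter_congr fun x _ => by omega)
  have hbylength : #t = ∑ m ∈ range (ℓ + k + 1), #{x ∈ s | g x ≤ k ∧ f x = m} := by
    have hmaps : (t : Set α).MapsTo f (range (ℓ + k + 1)) := by
      intro x hx
      simp only [t, mem_coe, mem_filter] at hx
      simp only [coe_range, Set.mem_Iio]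
      omega
    rw [card_eq_sum_card_fiberwise hmaps]
    refine sum_congr rfl fun m hm => ?_
    rw [mem_range] at hm
    rw [filter_filter]
    exact congrArg card (filter_congr fun x _ => by omega)
  rw [← hsmall, ← hlarge, ← hbylength, card_filter_add_card_filter_not]

theorem setOf_isPtn_sum_eq_finite (n : ℕ) : {l : List ℕ | IsPtn l ∧ l.sum = n}.Finite := by
  refine (Set.finite_range fun p : n.Partition => p.parts.sort (· ≥ ·)).subset ?_
  rintro l ⟨⟨hsorted, hpos⟩, hsum⟩
  refine ⟨⟨l, fun hi => hpos _ hi, by simpa using hsum⟩, ?_⟩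
  exact List.Perm.eq_of_pairwise' (Multiset.pairwise_sort _ _) hsorted
    (Multiset.coe_eq_coe.mp (Multiset.sort_eq _ _))

/-- `⋃ i, B_{r,i}(n)`: Gordon's difference condition, any number of ones. -/
noncomputable def gordonPtns (r n : ℕ) : Finset (List ℕ) :=
  Set.Finite.toFinset (s := {l : List ℕ | IsPtn l ∧ l.sum = n ∧ GordonCond r l})
    ((setOf_isPtn_sum_eq_finite n).subset fun _ hl => ⟨hl.1, hl.2.1⟩)

theorem ncard_gordon_and_eq_card_filter (r n : ℕ) (q : List ℕ → Prop) [DecidablePred q] :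
    {l : List ℕ | IsPtn l ∧ l.sum = n ∧ GordonCond r l ∧ q l}.ncard =
      #{l ∈ gordonPtns r n | q l} := by
  rw [← Set.ncard_coe_finset]
  congr 1
  ext l
  simp [gordonPtns, and_assoc]

theorem bcount_eq_card_filter (r i m n : ℕ) :
    bcount r i m n = #{l ∈ gordonPtns r n | l.count 1 ≤ i - 1 ∧ l.length = m} :=
  ncard_gordon_and_eq_card_filter r n _

theorem Gcount_eq_card_filter (r ℓ n : ℕ) :
    Gcount r ℓ n = #{l ∈ gordonPtns r n | l.count 1 ≤ r - 1 ∧ l.length - l.count 1 ≤ ℓ} := by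
  rw [Gcount, ← ncard_gordon_and_eq_card_filter]
  congr 1
  ext l
  simp only [MemB, Set.mem_ofPred_eq]
  tauto

/-- `G_{r,ℓ}(n) = Σ_{m=0}^{ℓ+r−1} b_{r,r}(m,n) − Σ_{i=1}^{r−1} b_{r,i}(ℓ+i, n)`. -/
theorem Gcount_eq (r ℓ n : ℕ) (hr : 2 ≤ r) :
    (Gcount r ℓ n : ℤ) = (∑ m ∈ Finset.range (ℓ + r), (bcount r r m n : ℤ))
      - ∑ i ∈ Finset.Icc 1 (r - 1), (bcount r i (ℓ + i) n : ℤ) := by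
  have hcount := card_filter_sub_le_add_sum_card_filter (gordonPtns r n) List.length
    (List.count 1) (r - 1) ℓ
  rw [show ℓ + (r - 1) + 1 = ℓ + r by omega, ← Gcount_eq_card_filter] at hcount
  simp only [← bcount_eq_card_filter] at hcount
  rw [eq_sub_iff_add_eq]
  exact_mod_cast hcount
end
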